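/- arXiv:1305.2805 — 3 statements merged into one kernel-verified Lean document; each statement's English description precedes it below -/
import Mathlib

section
/- If Λ ∈ Γ_k and 1 ≤ j < k ≤ n-1, then H_k(Λ)/H_{k-1}(Λ) ≤ H_j(Λ)/H_{j-1}(Λ); in particular all H_i(Λ) for i ≤ k-1 are positive so these ratios are well defined. -/
open Finset

/-- The `k`-th elementary symmetric function of `Λ ∈ ℝ^m`. -/
noncomputable def esymmF {m : ℕ} (Λ : Fin m → ℝ) (k : ℕ) : ℝ :=
  ∑ s ∈ Finset.univ.powersetCard k, ∏ i ∈ s, Λ i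

/-- The normalized `k`-th elementary symmetric function `H_k = σ_k / C(m,k)`. -/
noncomputable def Hnorm {m : ℕ} (Λ : Fin m → ℝ) (k : ℕ) : ℝ :=
  esymmF Λ k / (m.choose k)

/-- The Gårding cone `Γ_k = {Λ : σ_j(Λ) > 0 for all j ≤ k}`. -/
def GardingCone (m k : ℕ) : Set (Fin m → ℝ) :=
  {Λ | ∀ j, 1 ≤ j → j ≤ k → 0 < esymmF Λ j}

lemma esymmF_eq_multiset {m : ℕ} (Λ : Fin m → ℝ) (k : ℕ) :
    esymmF Λ k = (Multiset.map Λ Finset.univ.val).esymm k :=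
  (Finset.esymm_map_val Λ univ k).symm


lemma exists_fn_of_multiset (m : ℕ) (t : Multiset ℝ) (h : Multiset.card t = m) :
    ∃ μ : Fin m → ℝ, Multiset.map μ Finset.univ.val = t := by
  have hl : t.toList.length = m := by simp [h]
  subst hl
  refine ⟨t.toList.get, ?_⟩
  have h1 : (Finset.univ.val : Multiset (Fin t.toList.length)) = (List.finRange t.toList.length : List (Fin t.toList.length)) := by
    simp [Fin.univ_def]
  rw [h1, Multiset.map_coe, ← List.ofFn_eq_map, List.ofFn_get, Multiset.coe_toList]


lemma sum_powersetCard_two {ι : Type*} [DecidableEq ι] (s : Finset ι) (f : ι → ℝ) :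
    (∑ t ∈ s.powersetCard 2, ∏ i ∈ t, f i) * 2 = (∑ i ∈ s, f i)^2 - ∑ i ∈ s, (f i)^2 := by
  induction s using Finset.induction with
  | empty =>
    rw [powersetCard_eq_empty.mpr (by norm_num)]
    simp
  | @insert a s ha ih =>
    have disj : Disjoint (s.powersetCard 2) ((s.powersetCard 1).image (insert a)) := by
      rw [Finset.disjoint_left]
      intro t ht ht'
      obtain ⟨u, hu, rfl⟩ := Finset.mem_image.mp ht'
      exact ha ((mem_powersetCard.mp ht).1 (Finset.mem_insert_self a u))
    have inj : ∀ x ∈ s.powersetCard 1, ∀ y ∈ s.powersetCard 1,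
        insert a x = insert a y → x = y := by
      intro x hx y hy hxy
      have hxs : x ⊆ s := (mem_powersetCard.mp hx).1
      have hys : y ⊆ s := (mem_powersetCard.mp hy).1
      have h3 : ∀ z : Finset ι, z ⊆ s → (insert a z).erase a = z := fun z hz => by
        rw [Finset.erase_insert_eq_erase, Finset.erase_eq_of_notMem (fun h => ha (hz h))]
      rw [← h3 x hxs, ← h3 y hys, hxy]
    rw [powersetCard_succ_insert ha, Finset.sum_union disj]
    have h2 : ∑ t ∈ (s.powersetCard 1).image (insert a), ∏ i ∈ t, f i
        = f a * ∑ x ∈ s, f x := by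
      rw [Finset.sum_image inj, powersetCard_one, Finset.sum_map, Finset.mul_sum]
      apply Finset.sum_congr rfl
      intro x hx
      simp only [Function.Embedding.coeFn_mk]
      rw [Finset.prod_insert (by simp only [Finset.mem_singleton]; rintro rfl; exact ha hx),
        Finset.prod_singleton]
    rw [h2, Finset.sum_insert ha, Finset.sum_insert ha]
    nlinarith [ih]

lemma esymmF_compl {m c : ℕ} (Λ : Fin m → ℝ) (hc : c ≤ m) :
    esymmF Λ (m - c) = ∑ s ∈ (univ : Finset (Fin m)).powersetCard c, ∏ i ∈ sᶜ, Λ i := by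
  unfold esymmF
  apply Finset.sum_nbij' (i := fun s => sᶜ) (j := fun s => sᶜ)
  · intro a ha
    simp only [mem_powersetCard] at ha ⊢
    refine ⟨Finset.subset_univ _, ?_⟩
    rw [Finset.card_compl, ha.2, Fintype.card_fin]
    omega
  · intro a ha
    simp only [mem_powersetCard] at ha ⊢
    refine ⟨Finset.subset_univ _, ?_⟩
    rw [Finset.card_compl, ha.2, Fintype.card_fin]
  · intro a _; exact compl_compl a
  · intro a _; exact compl_compl a
  · intro a _; rw [compl_compl]

lemma esymmF_top {r : ℕ} (Λ : Fin (r+2) → ℝ) : esymmF Λ (r+2) = ∏ i, Λ i := by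
  unfold esymmF
  have h : powersetCard (r+2) (univ : Finset (Fin (r+2))) = {univ} := by
    simpa using Finset.powersetCard_self (univ : Finset (Fin (r+2)))
  rw [h, Finset.sum_singleton]

lemma newton_top {r : ℕ} (Λ : Fin (r+2) → ℝ) :
    Hnorm Λ r * Hnorm Λ (r+2) ≤ Hnorm Λ (r+1)^2 := by
  set P : Fin (r+2) → ℝ := fun i => ∏ j ∈ ({i} : Finset (Fin (r+2)))ᶜ, Λ j with hP
  have e1 : esymmF Λ (r+1) = ∑ i, P i := by
    have := esymmF_compl Λ (m := r+2) (c := 1) (by omega)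
    rw [show r + 2 - 1 = r + 1 by omega] at this
    rw [this, powersetCard_one, Finset.sum_map]
    rfl
  have e3 : esymmF Λ r * esymmF Λ (r+2) = ∑ s ∈ (univ : Finset (Fin (r+2))).powersetCard 2,
      ∏ i ∈ s, P i := by
    have := esymmF_compl Λ (m := r+2) (c := 2) (by omega)
    rw [show r + 2 - 2 = r by omega] at this
    rw [this, Finset.sum_mul]
    apply Finset.sum_congr rfl
    intro s hs
    obtain ⟨i, j, hij, rfl⟩ := Finset.card_eq_two.mp (mem_powersetCard.mp hs).2
    have hci : ({i} : Finset (Fin (r+2)))ᶜ = insert j ({i, j} : Finset (Fin (r+2)))ᶜ := by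
      ext x
      simp only [Finset.mem_compl, Finset.mem_singleton, Finset.mem_insert]
      constructor
      · intro hx
        by_cases h : x = j
        · exact Or.inl h
        · exact Or.inr (by simp [hx, h])
      · rintro (rfl | hx)
        · exact hij.symm
        · simp only [Finset.mem_insert, Finset.mem_singleton, not_or] at hx
          exact hx.1
    have hcj : ({j} : Finset (Fin (r+2)))ᶜ = insert i ({i, j} : Finset (Fin (r+2)))ᶜ := by
      ext x
      simp only [Finset.mem_compl, Finset.mem_singleton, Finset.mem_insert]
      constructor
      · intro hx
        by_cases h : x = i
        · exact Or.inl h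
        · exact Or.inr (by simp [hx, h])
      · rintro (rfl | hx)
        · exact hij
        · simp only [Finset.mem_insert, Finset.mem_singleton, not_or] at hx
          exact hx.2
    have hjn : j ∉ ({i, j} : Finset (Fin (r+2)))ᶜ := by simp
    have hin : i ∉ ({i, j} : Finset (Fin (r+2)))ᶜ := by simp
    rw [esymmF_top, Finset.prod_pair hij, hP]
    simp only
    rw [hci, hcj, Finset.prod_insert hjn, Finset.prod_insert hin,
      ← Finset.prod_mul_prod_compl ({i,j} : Finset (Fin (r+2))) Λ, Finset.prod_pair hij]
    ring
  have cs : (∑ i, P i)^2 ≤ (r+2) * ∑ i, (P i)^2 := by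
    have := sq_sum_le_card_mul_sum_sq (s := (univ : Finset (Fin (r+2)))) (f := P)
    simpa using this
  have key : 2 * (esymmF Λ r * esymmF Λ (r+2)) * (r+2) ≤ (r+1) * (esymmF Λ (r+1))^2 := by
    have h2 := sum_powersetCard_two (univ : Finset (Fin (r+2))) P
    rw [← e3, ← e1] at h2
    have hQ : ∑ i, (P i)^2 = (esymmF Λ (r+1))^2 - esymmF Λ r * esymmF Λ (r+2) * 2 := by
      linarith
    rw [hQ, ← e1] at cs
    nlinarith [cs]
  -- now the choose arithmetic
  have hn : (r+2).choose r * 2 = (r+2) * (r+1) := by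
    have h1 : (r+2).choose r = (r+2).choose 2 := by
      rw [← Nat.choose_symm (by omega)]
      congr 1
      omega
    have he : 2 ∣ (r + 2) * (r + 1) := by
      simpa [mul_comm] using (Nat.even_mul_succ_self (r+1)).two_dvd
    rw [h1, Nat.choose_two_right, show r + 2 - 1 = r + 1 from rfl, Nat.div_mul_cancel he]
  have hc2 : ((r+2).choose r : ℝ) * 2 = (r+2) * (r+1) := by exact_mod_cast hn
  have hc0 : (0:ℝ) < ((r+2).choose r : ℝ) := by
    exact_mod_cast Nat.choose_pos (show r ≤ r + 2 by omega)
  unfold Hnorm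
  rw [Nat.choose_self, Nat.choose_succ_self_right]
  push_cast
  rw [div_pow, div_mul_div_comm, mul_one, div_le_div_iff₀ hc0 (by positivity)]
  nlinarith [key, hc2, hc0, mul_le_mul_of_nonneg_right key (show (0:ℝ) ≤ (r:ℝ)+2 by positivity)]

open Polynomial

-- derivative step: esymm of roots of derivative
lemma esymm_derivative_roots (s : Multiset ℝ) (m : ℕ) (hcard : Multiset.card s = m + 1) :
    ∃ t : Multiset ℝ, Multiset.card t = m ∧
      ∀ i ≤ m, (m + 1 : ℝ) * t.esymm i = ((m : ℝ) + 1 - i) * s.esymm i := by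
  set p : ℝ[X] := (s.map fun a => X - C a).prod with hp
  have hmonic : p.Monic :=
    monic_multiset_prod_of_monic _ _ fun a _ => monic_X_sub_C a
  have hdeg : p.natDegree = m + 1 := by
    rw [hp, natDegree_multiset_prod_X_sub_C_eq_card, hcard]
  have hroots : p.roots = s := roots_multiset_prod_X_sub_C s
  set q : ℝ[X] := derivative p with hq
  have hqc : q.coeff m = (m : ℝ) + 1 := by
    rw [hq, coeff_derivative]
    have : p.coeff (m + 1) = 1 := by
      have := hmonic.leadingCoeff
      rwa [leadingCoeff, hdeg] at this
    rw [this]; push_cast; ring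
  have hqne : q.coeff m ≠ 0 := by rw [hqc]; positivity
  have hqdeg : q.natDegree = m := by
    have h1 : q.natDegree ≤ m := by
      have : q.natDegree ≤ p.natDegree - 1 := natDegree_derivative_le p
      rw [hdeg] at this; omega
    have h2 : m ≤ q.natDegree := le_natDegree_of_ne_zero hqne
    omega
  have hqlc : q.leadingCoeff = (m : ℝ) + 1 := by rw [leadingCoeff, hqdeg, hqc]
  have hq0 : q ≠ 0 := fun h => hqne (by simp [h])
  have hqroots : Multiset.card q.roots = m := by
    have h1 : Multiset.card q.roots ≤ m := hqdeg ▸ card_roots' q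
    have h2 := Polynomial.card_roots_le_derivative p
    rw [hroots, hcard, ← hq] at h2
    omega
  refine ⟨q.roots, hqroots, fun i hi => ?_⟩
  have hcp : p.coeff (m + 1 - i) = (-1 : ℝ) ^ i * s.esymm i := by
    have h := coeff_eq_esymm_roots_of_card (p := p) (by rw [hroots, hcard, hdeg])
      (k := m + 1 - i) (by omega)
    rw [hmonic.leadingCoeff, hdeg, hroots, show m + 1 - (m + 1 - i) = i by omega] at h
    rw [h]; ring
  have hcq : q.coeff (m - i) = ((m : ℝ) + 1) * ((-1 : ℝ) ^ i * q.roots.esymm i) := by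
    have h := coeff_eq_esymm_roots_of_card (p := q) (by rw [hqroots, hqdeg])
      (k := m - i) (by omega)
    rw [hqlc, hqdeg, show m - (m - i) = i by omega] at h
    rw [h]; ring
  have hder : q.coeff (m - i) = p.coeff (m + 1 - i) * ((m : ℝ) + 1 - i) := by
    rw [hq, coeff_derivative, show m - i + 1 = m + 1 - i by omega]
    congr 1
    push_cast [Nat.cast_sub (show i ≤ m by omega)]
    ring
  rw [hcq, hcp] at hder
  have hne : ((-1 : ℝ) ^ i) ≠ 0 := by positivity
  apply mul_left_cancel₀ hne
  ring_nf
  ring_nf at hder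
  linarith

lemma Hnorm_step (m : ℕ) (Λ : Fin (m+1) → ℝ) :
    ∃ μ : Fin m → ℝ, ∀ i ≤ m, Hnorm μ i = Hnorm Λ i := by
  have hcard : Multiset.card (Multiset.map Λ Finset.univ.val) = m + 1 := by simp
  obtain ⟨t, hct, het⟩ := esymm_derivative_roots _ m hcard
  obtain ⟨μ, hμ⟩ := exists_fn_of_multiset m t hct
  refine ⟨μ, fun i hi => ?_⟩
  have h1 : esymmF μ i = t.esymm i := by rw [esymmF_eq_multiset, hμ]
  have h2 : esymmF Λ i = (Multiset.map Λ Finset.univ.val).esymm i := esymmF_eq_multiset Λ i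
  have hch : (m+1) * m.choose i = (m + 1 - i) * (m+1).choose i := by
    have a := Nat.add_one_mul_choose_eq m i
    have b := Nat.choose_succ_right_eq (m+1) i
    calc (m+1) * m.choose i = (m+1).choose (i+1) * (i+1) := a
      _ = (m+1).choose i * (m + 1 - i) := b
      _ = (m + 1 - i) * (m+1).choose i := mul_comm _ _
  have hchR : ((m:ℝ)+1) * (m.choose i : ℝ) = ((m:ℝ) + 1 - i) * ((m+1).choose i : ℝ) := by
    have := congrArg (fun x : ℕ => (x : ℝ)) hch
    push_cast [Nat.cast_sub (show i ≤ m + 1 by omega)] at this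
    convert this using 2 <;> push_cast <;> ring
  have hc1 : (0:ℝ) < (m.choose i : ℝ) := by
    exact_mod_cast Nat.choose_pos hi
  have hc2 : (0:ℝ) < ((m+1).choose i : ℝ) := by
    exact_mod_cast Nat.choose_pos (show i ≤ m + 1 by omega)
  unfold Hnorm
  rw [h1, h2, div_eq_div_iff (by positivity) (by positivity)]
  have hA : ((m:ℝ)+1) ≠ 0 := by positivity
  apply mul_left_cancel₀ hA
  have hti := het i hi
  linear_combination (((m+1).choose i : ℝ)) * hti
    - ((Multiset.map Λ Finset.univ.val).esymm i) * hchR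

lemma newton_ineq : ∀ (m : ℕ) (Λ : Fin m → ℝ) (i : ℕ), i + 2 ≤ m →
    Hnorm Λ i * Hnorm Λ (i+2) ≤ Hnorm Λ (i+1)^2 := by
  intro m
  induction m with
  | zero => intro Λ i h; omega
  | succ m ih =>
    intro Λ i h
    rcases Nat.lt_or_ge (i + 2) (m + 1) with h' | h'
    · obtain ⟨μ, hμ⟩ := Hnorm_step m Λ
      rw [← hμ i (by omega), ← hμ (i+1) (by omega), ← hμ (i+2) (by omega)]
      exact ih μ i (by omega)
    · have hm : m = i + 1 := by omega
      subst hm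
      exact newton_top Λ

theorem ratio_monotone (n j k : ℕ) (hj : 1 ≤ j) (hjk : j < k) (hk : k ≤ n - 1)
    (Λ : Fin (n - 1) → ℝ) (hΛ : Λ ∈ GardingCone (n - 1) k) :
    (∀ i, i ≤ k - 1 → 0 < Hnorm Λ i) ∧
      Hnorm Λ k / Hnorm Λ (k - 1) ≤ Hnorm Λ j / Hnorm Λ (j - 1) := by
  have hm : k ≤ n - 1 := hk
  have hΛ' : ∀ i, 1 ≤ i → i ≤ k → 0 < esymmF Λ i := hΛ
  have hpos : ∀ i, i ≤ k → 0 < Hnorm Λ i := by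
    intro i hi
    rcases Nat.eq_zero_or_pos i with rfl | hi1
    · simp [Hnorm, esymmF]
    · have h1 : 0 < esymmF Λ i := hΛ' i hi1 hi
      have h2 : (0:ℝ) < ((n-1).choose i : ℝ) := by
        exact_mod_cast Nat.choose_pos (le_trans hi hm)
      exact div_pos h1 h2
  have step : ∀ i, i + 2 ≤ k → Hnorm Λ (i+2)/Hnorm Λ (i+1) ≤ Hnorm Λ (i+1)/Hnorm Λ i := by
    intro i hi
    rw [div_le_div_iff₀ (hpos (i+1) (by omega)) (hpos i (by omega))]
    have hn := newton_ineq (n-1) Λ i (by omega)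
    nlinarith [hn]
  have chain : ∀ c a, a + c + 1 ≤ k →
      Hnorm Λ (a+c+1)/Hnorm Λ (a+c) ≤ Hnorm Λ (a+1)/Hnorm Λ a := by
    intro c
    induction c with
    | zero => intro a _; exact le_refl _
    | succ c ihc =>
      intro a ha
      calc Hnorm Λ (a+(c+1)+1)/Hnorm Λ (a+(c+1)) ≤ Hnorm Λ (a+c+1)/Hnorm Λ (a+c) :=
            step (a+c) (by omega)
        _ ≤ Hnorm Λ (a+1)/Hnorm Λ a := ihc a (by omega)
  refine ⟨fun i hi => hpos i (by omega), ?_⟩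
  have hc := chain (k - j) (j - 1) (by omega)
  rw [show j - 1 + (k - j) + 1 = k by omega, show j - 1 + (k - j) = k - 1 by omega,
    show j - 1 + 1 = j by omega] at hc
  exact hc
end

section
/- The Gårding cone Γ_k ⊂ ℝ^{n-1} is a convex cone: it is closed under addition and under multiplication by positive scalars. -/
open Finset Polynomial

namespace Gard

variable {m : ℕ}

/-- elementary symmetric polynomial over a base set `A` -/
def esymA {R : Type*} [CommRing R] (A : Finset (Fin m)) (j : ℕ) (x : Fin m → R) : R :=
  ∑ S ∈ A.powersetCard j, ∏ i ∈ S, x i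

lemma esymA_zero {R : Type*} [CommRing R] (A : Finset (Fin m)) (x : Fin m → R) :
    esymA A 0 x = 1 := by simp [esymA]

lemma esymA_of_card_lt {R : Type*} [CommRing R] {A : Finset (Fin m)} {j : ℕ}
    (h : A.card < j) (x : Fin m → R) : esymA A j x = 0 := by
  rw [esymA, Finset.powersetCard_eq_empty.2 h, Finset.sum_empty]

/-- double counting: pairs (S, T⊆S) vs (T, W ⊆ A\T). -/
lemma DC {M : Type*} [AddCommMonoid M] (A : Finset (Fin m)) {j d : ℕ} (hdj : d ≤ j)
    (F : Finset (Fin m) → Finset (Fin m) → M) :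
    ∑ S ∈ A.powersetCard j, ∑ T ∈ S.powersetCard d, F T (S \ T)
      = ∑ T ∈ A.powersetCard d, ∑ W ∈ (A \ T).powersetCard (j - d), F T W := by
  rw [Finset.sum_sigma', Finset.sum_sigma']
  refine Finset.sum_nbij' (fun p => ⟨p.2, p.1 \ p.2⟩) (fun q => ⟨q.1 ∪ q.2, q.1⟩)
    ?_ ?_ ?_ ?_ ?_
  · rintro ⟨S, T⟩ hp
    simp only [Finset.mem_sigma, Finset.mem_powersetCard] at hp ⊢
    obtain ⟨⟨hSA, hSc⟩, hTS, hTc⟩ := hp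
    refine ⟨⟨hTS.trans hSA, hTc⟩, Finset.sdiff_subset_sdiff hSA le_rfl, ?_⟩
    rw [Finset.card_sdiff_of_subset hTS, hSc, hTc]
  · rintro ⟨T, W⟩ hq
    simp only [Finset.mem_sigma, Finset.mem_powersetCard] at hq ⊢
    obtain ⟨⟨hTA, hTc⟩, hWA, hWc⟩ := hq
    have hdisj : Disjoint T W := Finset.disjoint_sdiff.mono_right hWA
    have hWA' : W ⊆ A := hWA.trans (Finset.sdiff_subset)
    refine ⟨⟨Finset.union_subset hTA hWA', ?_⟩, Finset.subset_union_left, hTc⟩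
    rw [Finset.card_union_of_disjoint hdisj, hTc, hWc]
    omega
  · rintro ⟨S, T⟩ hp
    simp only [Finset.mem_sigma, Finset.mem_powersetCard] at hp
    obtain ⟨⟨hSA, hSc⟩, hTS, hTc⟩ := hp
    exact Sigma.ext (Finset.union_sdiff_of_subset hTS) (by simp)
  · rintro ⟨T, W⟩ hq
    simp only [Finset.mem_sigma, Finset.mem_powersetCard] at hq
    obtain ⟨⟨hTA, hTc⟩, hWA, hWc⟩ := hq
    have hdisj : Disjoint T W := Finset.disjoint_sdiff.mono_right hWA
    exact Sigma.ext rfl (by simp [Finset.union_sdiff_cancel_left hdisj])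
  · rintro ⟨S, T⟩ _; rfl

/-- reflection inside a fixed set -/
lemma REFL {M : Type*} [AddCommMonoid M] (S : Finset (Fin m)) {d : ℕ} (hd : d ≤ S.card)
    (h : Finset (Fin m) → M) :
    ∑ U ∈ S.powersetCard d, h (S \ U) = ∑ W ∈ S.powersetCard (S.card - d), h W := by
  refine Finset.sum_nbij' (fun U => S \ U) (fun W => S \ W) ?_ ?_ ?_ ?_ ?_
  · intro U hU
    simp only [Finset.mem_powersetCard] at hU ⊢
    exact ⟨Finset.sdiff_subset, by rw [Finset.card_sdiff_of_subset hU.1, hU.2]⟩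
  · intro W hW
    simp only [Finset.mem_powersetCard] at hW ⊢
    refine ⟨Finset.sdiff_subset, ?_⟩
    rw [Finset.card_sdiff_of_subset hW.1, hW.2]
    omega
  · intro U hU
    simp only [Finset.mem_powersetCard] at hU
    exact Finset.sdiff_sdiff_eq_self hU.1
  · intro W hW
    simp only [Finset.mem_powersetCard] at hW
    exact Finset.sdiff_sdiff_eq_self hW.1
  · intro U _; rfl

/-- counting collapse -/
lemma CT {R : Type*} [CommRing R] (A : Finset (Fin m)) (d r : ℕ) (x : Fin m → R) :
    ∑ U ∈ A.powersetCard d, esymA (A \ U) r x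
      = ((A.card - r).choose d) • esymA A r x := by
  have h1 : ∑ U ∈ A.powersetCard d, esymA (A \ U) r x
      = ∑ S ∈ A.powersetCard (d + r), ∑ U ∈ S.powersetCard d, ∏ i ∈ S \ U, x i := by
    rw [DC A (Nat.le_add_right d r) (fun U W => ∏ i ∈ W, x i)]
    simp only [esymA, Nat.add_sub_cancel_left]
  rw [h1]
  have h2 : ∀ S ∈ A.powersetCard (d + r), ∑ U ∈ S.powersetCard d, ∏ i ∈ S \ U, x i
      = ∑ W ∈ S.powersetCard r, ∏ i ∈ W, x i := by
    intro S hS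
    rw [Finset.mem_powersetCard] at hS
    have := REFL S (d := d) (by omega) (fun W => ∏ i ∈ W, x i)
    rwa [hS.2, Nat.add_sub_cancel_left] at this
  rw [Finset.sum_congr rfl h2]
  rw [DC A (Nat.le_add_left r d) (fun T W => ∏ i ∈ T, x i)]
  have h3 : ∀ T ∈ A.powersetCard r, ∑ W ∈ (A \ T).powersetCard (d + r - r), ∏ i ∈ T, x i
      = ((A.card - r).choose d) • ∏ i ∈ T, x i := by
    intro T hT
    rw [Finset.mem_powersetCard] at hT
    rw [Finset.sum_const, Finset.card_powersetCard, Finset.card_sdiff_of_subset hT.1, hT.2]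
    simp
  rw [Finset.sum_congr rfl h3, esymA, ← Finset.smul_sum]


/-- erase double counting (for derivatives) -/
lemma DC2 {M : Type*} [AddCommMonoid M] (A : Finset (Fin m)) (j : ℕ)
    (h : Finset (Fin m) → M) :
    ∑ S ∈ A.powersetCard (j+1), ∑ l ∈ S, h (S.erase l)
      = (A.card - j) • ∑ T ∈ A.powersetCard j, h T := by
  have key : ∑ S ∈ A.powersetCard (j+1), ∑ l ∈ S, h (S.erase l)
      = ∑ T ∈ A.powersetCard j, ∑ _l ∈ A \ T, h T := by
    rw [Finset.sum_sigma', Finset.sum_sigma']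
    refine Finset.sum_nbij' (fun p => ⟨p.1.erase p.2, p.2⟩) (fun q => ⟨insert q.2 q.1, q.2⟩)
      ?_ ?_ ?_ ?_ ?_
    · rintro ⟨S, l⟩ hp
      simp only [Finset.mem_sigma, Finset.mem_powersetCard, Finset.mem_sdiff] at hp ⊢
      obtain ⟨⟨hSA, hSc⟩, hlS⟩ := hp
      refine ⟨⟨(Finset.erase_subset l S).trans hSA, ?_⟩, hSA hlS, Finset.notMem_erase l S⟩
      rw [Finset.card_erase_of_mem hlS, hSc]
      omega
    · rintro ⟨T, l⟩ hq
      simp only [Finset.mem_sigma, Finset.mem_powersetCard, Finset.mem_sdiff] at hq ⊢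
      obtain ⟨⟨hTA, hTc⟩, hlA, hlT⟩ := hq
      refine ⟨⟨Finset.insert_subset hlA hTA, ?_⟩, Finset.mem_insert_self l T⟩
      rw [Finset.card_insert_of_notMem hlT, hTc]
    · rintro ⟨S, l⟩ hp
      simp only [Finset.mem_sigma, Finset.mem_powersetCard] at hp
      exact Sigma.ext (Finset.insert_erase hp.2) (by simp)
    · rintro ⟨T, l⟩ hq
      simp only [Finset.mem_sigma, Finset.mem_powersetCard, Finset.mem_sdiff] at hq
      exact Sigma.ext (Finset.erase_insert hq.2.2) (by simp)
    · rintro ⟨S, l⟩ _; rfl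
  rw [key]
  have h2 : ∀ T ∈ A.powersetCard j, ∑ _l ∈ A \ T, h T = (A.card - j) • h T := by
    intro T hT
    rw [Finset.mem_powersetCard] at hT
    rw [Finset.sum_const, Finset.card_sdiff_of_subset hT.1, hT.2]
  rw [Finset.sum_congr rfl h2, ← Finset.smul_sum]

/-- fundamental expansion of esym along a direction -/
lemma FE {R : Type*} [CommRing R] (A : Finset (Fin m)) (r : ℕ) (x w : Fin m → R) (s : R) :
    esymA A r (fun i => x i + s * w i)
      = ∑ d ∈ Finset.range (r+1),
          s^d * ∑ T ∈ A.powersetCard d, (∏ i ∈ T, w i) * esymA (A \ T) (r - d) x := by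
  have step1 : esymA A r (fun i => x i + s * w i)
      = ∑ S ∈ A.powersetCard r, ∑ T ∈ S.powerset, (∏ i ∈ T, s * w i) * ∏ i ∈ S \ T, x i := by
    unfold esymA
    refine Finset.sum_congr rfl fun S _ => ?_
    have hc : ∀ i ∈ S, x i + s * w i = s * w i + x i := fun i _ => by ring
    rw [Finset.prod_congr rfl hc, Finset.prod_add]
  rw [step1]
  have step2 : ∀ S ∈ A.powersetCard r,
      ∑ T ∈ S.powerset, (∏ i ∈ T, s * w i) * ∏ i ∈ S \ T, x i
      = ∑ d ∈ Finset.range (r+1), ∑ T ∈ S.powersetCard d,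
          s^d * ((∏ i ∈ T, w i) * ∏ i ∈ S \ T, x i) := by
    intro S hS
    rw [Finset.mem_powersetCard] at hS
    rw [Finset.powerset_card_disjiUnion S]; refine (Finset.sum_disjiUnion _ _ _).trans ?_; rw [hS.2]
    refine Finset.sum_congr rfl fun d _ => Finset.sum_congr rfl fun T hT => ?_
    rw [Finset.mem_powersetCard] at hT
    rw [Finset.prod_mul_distrib, Finset.prod_const, hT.2, mul_assoc]
  rw [Finset.sum_congr rfl step2, Finset.sum_comm]
  refine Finset.sum_congr rfl fun d hd => ?_
  rw [Finset.mem_range] at hd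
  rw [DC A (show d ≤ r by omega) (fun T W => s^d * ((∏ i ∈ T, w i) * ∏ i ∈ W, x i))]
  simp_rw [esymA, Finset.mul_sum]

/-- homogeneity -/
lemma esymA_smul {R : Type*} [CommRing R] (A : Finset (Fin m)) (j : ℕ) (c : R) (x : Fin m → R) :
    esymA A j (fun i => c * x i) = c^j * esymA A j x := by
  unfold esymA
  rw [Finset.mul_sum]
  refine Finset.sum_congr rfl fun S hS => ?_
  rw [Finset.mem_powersetCard] at hS
  rw [Finset.prod_mul_distrib, Finset.prod_const, hS.2]

lemma esymA_ones {R : Type*} [CommRing R] (A : Finset (Fin m)) (j : ℕ) :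
    esymA A j (fun _ => (1:R)) = (A.card.choose j : R) := by
  unfold esymA
  simp [Finset.card_powersetCard]

/-- crude norm bound -/
lemma EB {K : Type*} [NormedField K] (A : Finset (Fin m)) (r : ℕ) (z : Fin m → K) :
    ‖esymA A r z‖ ≤ ((A.powersetCard r).card : ℝ) * ∏ i ∈ Finset.univ, max 1 ‖z i‖ := by
  refine (norm_sum_le _ _).trans ?_
  have hb : ∀ S ∈ A.powersetCard r, ‖∏ i ∈ S, z i‖ ≤ ∏ i ∈ Finset.univ, max 1 ‖z i‖ := by
    intro S _
    rw [norm_prod]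
    refine (Finset.prod_le_prod (fun i _ => norm_nonneg _)
      (fun i _ => le_max_right 1 ‖z i‖)).trans ?_
    have h1 : (0:ℝ) ≤ ∏ i ∈ S, max 1 ‖z i‖ :=
      Finset.prod_nonneg fun i _ => le_trans zero_le_one (le_max_left _ _)
    have h2 : (1:ℝ) ≤ ∏ i ∈ Finset.univ \ S, max 1 ‖z i‖ := by
      calc (1:ℝ) = ∏ _i ∈ Finset.univ \ S, (1:ℝ) := (Finset.prod_const_one).symm
        _ ≤ _ := Finset.prod_le_prod (fun i _ => zero_le_one) (fun i _ => le_max_left _ _)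
    calc ∏ i ∈ S, max 1 ‖z i‖ ≤ (∏ i ∈ Finset.univ \ S, max 1 ‖z i‖) * ∏ i ∈ S, max 1 ‖z i‖ :=
          le_mul_of_one_le_left h1 h2
      _ = ∏ i ∈ Finset.univ, max 1 ‖z i‖ := Finset.prod_sdiff (Finset.subset_univ S)
  calc ∑ S ∈ A.powersetCard r, ‖∏ i ∈ S, z i‖
      ≤ ∑ _S ∈ A.powersetCard r, ∏ i ∈ Finset.univ, max 1 ‖z i‖ := Finset.sum_le_sum hb
    _ = _ := by rw [Finset.sum_const, nsmul_eq_mul]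

/-- general linear-factor polynomial attached to esymA -/
noncomputable def VP {R : Type*} [CommRing R] (A : Finset (Fin m)) (j : ℕ)
    (a b : Fin m → R) : Polynomial R :=
  ∑ S ∈ A.powersetCard j, ∏ i ∈ S, (Polynomial.C (a i) + Polynomial.C (b i) * Polynomial.X)

lemma lin_natDegree_le {R : Type*} [CommRing R] (a b : R) :
    (Polynomial.C a + Polynomial.C b * Polynomial.X).natDegree ≤ 1 := by
  refine (Polynomial.natDegree_add_le _ _).trans ?_
  simp only [Polynomial.natDegree_C, max_le_iff]
  exact ⟨Nat.zero_le 1, (Polynomial.natDegree_C_mul_le b X).trans Polynomial.natDegree_X_le⟩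

lemma prod_lin_natDegree_le {R : Type*} [CommRing R] (S : Finset (Fin m)) (a b : Fin m → R) :
    (∏ i ∈ S, (Polynomial.C (a i) + Polynomial.C (b i) * Polynomial.X)).natDegree ≤ S.card := by
  have h1 := Polynomial.natDegree_prod_le S
    (fun i => Polynomial.C (a i) + Polynomial.C (b i) * Polynomial.X)
  have h2 : ∑ i ∈ S, (Polynomial.C (a i) + Polynomial.C (b i) * Polynomial.X).natDegree
      ≤ S.card := by
    have := Finset.sum_le_sum (s := S)
      (f := fun i => (Polynomial.C (a i) + Polynomial.C (b i) * Polynomial.X).natDegree)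
      (g := fun _ => 1) (fun i _ => lin_natDegree_le _ _)
    simpa using this
  exact h1.trans h2

lemma prod_lin_coeff_card {R : Type*} [CommRing R] (S : Finset (Fin m)) (a b : Fin m → R) :
    (∏ i ∈ S, (Polynomial.C (a i) + Polynomial.C (b i) * Polynomial.X)).coeff S.card
      = ∏ i ∈ S, b i := by
  classical
  induction S using Finset.induction_on with
  | empty => simp
  | @insert i S hi ih =>
    rw [Finset.prod_insert hi, Finset.prod_insert hi, Finset.card_insert_of_notMem hi]
    rw [add_mul, Polynomial.coeff_add, Polynomial.coeff_C_mul]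
    have h0 : (∏ i ∈ S, (Polynomial.C (a i) + Polynomial.C (b i) * Polynomial.X)).coeff
        (S.card + 1) = 0 :=
      Polynomial.coeff_eq_zero_of_natDegree_lt (lt_of_le_of_lt (prod_lin_natDegree_le S a b)
        (Nat.lt_succ_self _))
    rw [h0, mul_zero, zero_add, mul_assoc, Polynomial.coeff_C_mul, Polynomial.coeff_X_mul, ih]

lemma VP_natDegree_le {R : Type*} [CommRing R] (A : Finset (Fin m)) (j : ℕ) (a b : Fin m → R) :
    (VP A j a b).natDegree ≤ j := by
  refine Polynomial.natDegree_sum_le_of_forall_le _ _ fun S hS => ?_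
  rw [Finset.mem_powersetCard] at hS
  exact hS.2 ▸ prod_lin_natDegree_le S a b

lemma VP_coeff_top {R : Type*} [CommRing R] (A : Finset (Fin m)) (j : ℕ) (a b : Fin m → R) :
    (VP A j a b).coeff j = esymA A j b := by
  rw [VP, Polynomial.finset_sum_coeff]
  refine Finset.sum_congr rfl fun S hS => ?_
  rw [Finset.mem_powersetCard] at hS
  rw [← hS.2, prod_lin_coeff_card]

lemma VP_coeff_zero_of_gt {R : Type*} [CommRing R] (A : Finset (Fin m)) {j d : ℕ} (hd : j < d)
    (a b : Fin m → R) : (VP A j a b).coeff d = 0 :=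
  Polynomial.coeff_eq_zero_of_natDegree_lt (lt_of_le_of_lt (VP_natDegree_le A j a b) hd)

lemma VP_eval {R : Type*} [CommRing R] (A : Finset (Fin m)) (j : ℕ) (a b : Fin m → R) (t : R) :
    (VP A j a b).eval t = esymA A j (fun i => a i + t * b i) := by
  rw [VP, Polynomial.eval_finset_sum, esymA]
  refine Finset.sum_congr rfl fun S _ => ?_
  rw [Polynomial.eval_prod]
  refine Finset.prod_congr rfl fun i _ => ?_
  simp only [Polynomial.eval_add, Polynomial.eval_mul, Polynomial.eval_C, Polynomial.eval_X]
  ring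

/-- the `e`-direction polynomial -/
noncomputable def QP {R : Type*} [CommRing R] (A : Finset (Fin m)) (j : ℕ) (y : Fin m → R) :
    Polynomial R :=
  ∑ S ∈ A.powersetCard j, ∏ i ∈ S, (Polynomial.X + Polynomial.C (y i))

lemma QP_eq_VP {R : Type*} [CommRing R] (A : Finset (Fin m)) (j : ℕ) (y : Fin m → R) :
    QP A j y = VP A j y (fun _ => 1) := by
  refine Finset.sum_congr rfl fun S _ => Finset.prod_congr rfl fun i _ => by
    rw [Polynomial.C_1]; ring

lemma QP_eval {R : Type*} [CommRing R] (A : Finset (Fin m)) (j : ℕ) (y : Fin m → R) (s : R) :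
    (QP A j y).eval s = esymA A j (fun i => y i + s) := by
  rw [QP_eq_VP, VP_eval]
  simp [mul_one]

lemma QP_coeff_top {R : Type*} [CommRing R] (A : Finset (Fin m)) (j : ℕ) (y : Fin m → R) :
    (QP A j y).coeff j = (A.card.choose j : R) := by
  rw [QP_eq_VP, VP_coeff_top, esymA_ones]

lemma derivative_prod_lin {R : Type*} [CommRing R] (S : Finset (Fin m)) (y : Fin m → R) :
    Polynomial.derivative (∏ i ∈ S, (Polynomial.X + Polynomial.C (y i)))
      = ∑ l ∈ S, ∏ i ∈ S.erase l, (Polynomial.X + Polynomial.C (y i)) := by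
  classical
  rw [Finset.prod_eq_multiset_prod, Polynomial.derivative_prod, Finset.sum]
  rw [Multiset.map_congr rfl (fun l _ => by
    rw [show Polynomial.derivative (Polynomial.X + Polynomial.C (y l)) = 1 by simp, mul_one,
      ← Finset.erase_val, ← Finset.prod_eq_multiset_prod])]

lemma QP_derivative {R : Type*} [CommRing R] (A : Finset (Fin m)) (j : ℕ) (y : Fin m → R) :
    Polynomial.derivative (QP A (j+1) y) = ((A.card - j : ℕ) : Polynomial R) * QP A j y := by
  rw [QP, map_sum]
  rw [Finset.sum_congr rfl (fun S _ => derivative_prod_lin S y)]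
  rw [DC2 A j (fun T => ∏ i ∈ T, (Polynomial.X + Polynomial.C (y i)))]
  rw [nsmul_eq_mul]
  rfl


lemma QP_top_roots (A : Finset (Fin m)) (y : Fin m → ℝ) :
    (QP A A.card y).roots = A.val.map (fun i => - y i) := by
  rw [QP, Finset.powersetCard_self, Finset.sum_singleton]
  have h : ∏ i ∈ A, (Polynomial.X + Polynomial.C (y i))
      = (Multiset.map (fun a => Polynomial.X - Polynomial.C a)
          (A.val.map (fun i => - (y i)))).prod := by
    rw [Multiset.map_map, Finset.prod_eq_multiset_prod]
    refine congrArg _ (Multiset.map_congr rfl fun i _ => ?_)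
    simp [sub_neg_eq_add]
  rw [h, Polynomial.roots_multiset_prod_X_sub_C]

lemma QP_roots_ge (A : Finset (Fin m)) (y : Fin m → ℝ) :
    ∀ d, d ≤ A.card → (A.card - d : ℕ) ≤ Multiset.card (QP A (A.card - d) y).roots := by
  intro d
  induction d with
  | zero =>
    intro _
    simp only [Nat.sub_zero]
    rw [QP_top_roots]
    simp
  | succ d ih =>
    intro hd
    have hd' : d ≤ A.card := by omega
    have hih := ih hd'
    have hsplit : A.card - d = (A.card - (d+1)) + 1 := by omega
    have hder := QP_derivative A (A.card - (d+1)) y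
    have hconst : (A.card - (A.card - (d+1)) : ℕ) = d + 1 := by omega
    rw [hconst] at hder
    have hrolle := Polynomial.card_roots_le_derivative (QP A (A.card - d) y)
    rw [hsplit, hder] at hrolle
    have hcast : ((d + 1 : ℕ) : Polynomial ℝ) = Polynomial.C ((d+1 : ℕ) : ℝ) := by
      simp
    rw [hcast, Polynomial.roots_C_mul _ (by positivity)] at hrolle
    rw [hsplit] at hih
    omega

lemma QP_fact (A : Finset (Fin m)) {j : ℕ} (hj : j ≤ A.card) (y : Fin m → ℝ) :
    ∃ R : Multiset ℝ, Multiset.card R = j ∧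
      (∀ s : ℝ, esymA A j (fun i => y i + s)
          = (A.card.choose j : ℝ) * (R.map (fun r => s - r)).prod) ∧
      (∀ w : ℂ, esymA A j (fun i => ((y i : ℂ) + w))
          = (A.card.choose j : ℂ) * (R.map (fun r : ℝ => w - (r:ℂ))).prod) := by
  set p := QP A j y with hp
  have hdegle : p.natDegree ≤ j := by rw [hp, QP_eq_VP]; exact VP_natDegree_le A j y _
  have hcoeff : p.coeff j = (A.card.choose j : ℝ) := QP_coeff_top A j y
  have hchoose : (0:ℝ) < (A.card.choose j : ℝ) := by
    exact_mod_cast Nat.choose_pos hj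
  have hne : p.coeff j ≠ 0 := by rw [hcoeff]; exact ne_of_gt hchoose
  have hdeg : p.natDegree = j :=
    le_antisymm hdegle (Polynomial.le_natDegree_of_ne_zero hne)
  have hroots_ge : j ≤ Multiset.card p.roots := by
    have := QP_roots_ge A y (A.card - j) (by omega)
    rwa [show A.card - (A.card - j) = j by omega] at this
  have hcard : Multiset.card p.roots = p.natDegree :=
    le_antisymm (Polynomial.card_roots' p) (hdeg ▸ hroots_ge)
  have hsplits : Polynomial.Splits p :=
    (Polynomial.splits_iff_card_roots).2 hcard
  have hlead : p.leadingCoeff = (A.card.choose j : ℝ) := by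
    rw [Polynomial.leadingCoeff, hdeg, hcoeff]
  have hfact := hsplits.eq_prod_roots
  rw [hlead] at hfact
  refine ⟨p.roots, by rw [hcard, hdeg], ?_, ?_⟩
  · intro s
    have := QP_eval A j y s
    rw [← this, hp] at *
    conv_lhs => rw [hfact]
    rw [Polynomial.eval_mul, Polynomial.eval_C, Polynomial.eval_multiset_prod,
      Multiset.map_map]
    congr 2
    refine Multiset.map_congr rfl fun r _ => ?_
    simp
  · intro w
    have hmap : (QP A j y).map Complex.ofRealHom = QP A j (fun i => ((y i : ℂ))) := by
      simp only [QP, Polynomial.map_sum, Polynomial.map_prod, Polynomial.map_add,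
        Polynomial.map_X, Polynomial.map_C, Complex.ofRealHom_eq_coe]
    have heval : esymA A j (fun i => ((y i : ℂ) + w))
        = ((QP A j y).map Complex.ofRealHom).eval w := by
      rw [hmap, QP_eval]
    rw [heval, ← hp]
    conv_lhs => rw [hfact]
    rw [Polynomial.map_mul, Polynomial.map_C, Polynomial.map_multiset_prod, Multiset.map_map,
      Polynomial.eval_mul, Polynomial.eval_C, Polynomial.eval_multiset_prod, Multiset.map_map]
    refine congrArg₂ (· * ·) (by simp)
      (congrArg Multiset.prod (Multiset.map_congr rfl fun r _ => by simp))

lemma VP_factC (A : Finset (Fin m)) (j : ℕ) (a b : Fin m → ℂ) (hb : esymA A j b ≠ 0) :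
    ∃ Z : Multiset ℂ, Multiset.card Z = j ∧
      ∀ t : ℂ, esymA A j (fun i => a i + t * b i)
        = esymA A j b * (Z.map (fun z => t - z)).prod := by
  set p := VP A j a b with hp
  have hdegle : p.natDegree ≤ j := VP_natDegree_le A j a b
  have hcoeff : p.coeff j = esymA A j b := VP_coeff_top A j a b
  have hne : p.coeff j ≠ 0 := by rw [hcoeff]; exact hb
  have hdeg : p.natDegree = j :=
    le_antisymm hdegle (Polynomial.le_natDegree_of_ne_zero hne)
  have hsplits : Polynomial.Splits p := IsAlgClosed.splits p
  have hcard : Multiset.card p.roots = p.natDegree :=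
    (Polynomial.splits_iff_card_roots).1 hsplits
  have hlead : p.leadingCoeff = esymA A j b := by
    rw [Polynomial.leadingCoeff, hdeg, hcoeff]
  have hfact := hsplits.eq_prod_roots
  rw [hlead] at hfact
  refine ⟨p.roots, by rw [hcard, hdeg], fun t => ?_⟩
  rw [← VP_eval A j a b t, ← hp]
  conv_lhs => rw [hfact]
  rw [Polynomial.eval_mul, Polynomial.eval_C, Polynomial.eval_multiset_prod, Multiset.map_map]
  refine congrArg _ (congrArg Multiset.prod (Multiset.map_congr rfl fun z _ => ?_))
  simp

lemma esymA_hom {R S : Type*} [CommRing R] [CommRing S] (f : R →+* S) (A : Finset (Fin m))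
    (j : ℕ) (x : Fin m → R) : esymA A j (fun i => f (x i)) = f (esymA A j x) := by
  unfold esymA
  rw [map_sum]
  exact Finset.sum_congr rfl fun S _ => (map_prod f _ _).symm

/-- eventual positivity with explicit bounds -/
lemma EPB (N : ℕ) (a : ℕ → ℝ) (L B : ℝ) (hL : 0 < L) (haN : L ≤ a N)
    (hB : ∀ i, i < N → |a i| ≤ B) :
    ∀ s : ℝ, max 1 ((B * N + 1)/L) ≤ s → 0 < ∑ i ∈ Finset.range (N+1), a i * s^i := by
  intro s hs
  have hs1 : (1:ℝ) ≤ s := le_trans (le_max_left _ _) hs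
  have hs0 : (0:ℝ) < s := lt_of_lt_of_le one_pos hs1
  rcases Nat.eq_zero_or_pos N with hN | hN
  · subst hN
    simpa using lt_of_lt_of_le hL (by simpa using haN)
  have hBN : (0:ℝ) ≤ B := le_trans (abs_nonneg _) (hB 0 hN)
  have hLs : B * N + 1 ≤ L * s := by
    have h3 : (B * N + 1)/L ≤ s := le_trans (le_max_right _ _) hs
    rw [div_le_iff₀ hL] at h3
    nlinarith
  rw [Finset.sum_range_succ]
  have htail : -(B * N * s^(N-1)) ≤ ∑ i ∈ Finset.range N, a i * s^i := by
    have h1 : ∀ i ∈ Finset.range N, -(B * s^(N-1)) ≤ a i * s^i := by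
      intro i hi
      rw [Finset.mem_range] at hi
      have hsp : s^i ≤ s^(N-1) := pow_le_pow_right₀ hs1 (by omega)
      have : |a i * s^i| ≤ B * s^(N-1) := by
        rw [abs_mul, abs_pow, abs_of_pos hs0]
        exact mul_le_mul (hB i hi) hsp (pow_nonneg hs0.le i) hBN
      nlinarith [abs_nonneg (a i * s^i), neg_abs_le (a i * s^i)]
    calc -(B * N * s^(N-1)) = ∑ _i ∈ Finset.range N, -(B * s^(N-1)) := by
          rw [Finset.sum_const, Finset.card_range, nsmul_eq_mul]; ring
      _ ≤ _ := Finset.sum_le_sum h1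
  have hhead : (B * N + 1) * s^(N-1) ≤ a N * s^N := by
    have h2 : s^N = s * s^(N-1) := by
      rw [← pow_succ']
      congr 1
      omega
    rw [h2]
    have hsN : (0:ℝ) < s^(N-1) := pow_pos hs0 _
    calc (B * N + 1) * s^(N-1) ≤ (L * s) * s^(N-1) :=
          mul_le_mul_of_nonneg_right hLs hsN.le
      _ ≤ a N * (s * s^(N-1)) := by
          have := mul_le_mul_of_nonneg_right haN
            (by positivity : (0:ℝ) ≤ s * s^(N-1))
          nlinarith
  have hsN : (0:ℝ) < s^(N-1) := pow_pos hs0 _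
  nlinarith

/-- root bound -/
lemma RB {K : Type*} [NormedField K] (N : ℕ) (a : ℕ → K) (z : K)
    (h : ∑ i ∈ Finset.range (N+1), a i * z^i = 0) (L B : ℝ) (hL : 0 < L) (hLa : L ≤ ‖a N‖)
    (hB : ∀ i, i < N → ‖a i‖ ≤ B) : ‖z‖ ≤ max 1 (B * N / L) := by
  rcases le_or_gt ‖z‖ 1 with h1 | h1
  · exact le_trans h1 (le_max_left _ _)
  have hz0 : (0:ℝ) < ‖z‖ := lt_trans one_pos h1
  rcases Nat.eq_zero_or_pos N with hN | hN
  · subst hN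
    simp only [zero_add, Finset.sum_range_one, pow_zero, mul_one] at h
    rw [h, norm_zero] at hLa
    linarith
  rw [Finset.sum_range_succ, add_eq_zero_iff_eq_neg] at h
  have hnorm : ‖a N‖ * ‖z‖^N ≤ B * N * ‖z‖^(N-1) := by
    calc ‖a N‖ * ‖z‖^N = ‖a N * z^N‖ := by rw [norm_mul, norm_pow]
      _ = ‖∑ i ∈ Finset.range N, a i * z^i‖ := by rw [h, norm_neg]
      _ ≤ ∑ i ∈ Finset.range N, ‖a i * z^i‖ := norm_sum_le _ _
      _ ≤ ∑ _i ∈ Finset.range N, B * ‖z‖^(N-1) := by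
          refine Finset.sum_le_sum fun i hi => ?_
          rw [Finset.mem_range] at hi
          rw [norm_mul, norm_pow]
          exact mul_le_mul (hB i hi) (pow_le_pow_right₀ h1.le (by omega))
            (pow_nonneg (norm_nonneg z) i) (le_trans (norm_nonneg _) (hB 0 hN))
      _ = B * N * ‖z‖^(N-1) := by rw [Finset.sum_const, Finset.card_range, nsmul_eq_mul]; ring
  have hsplit : ‖z‖^N = ‖z‖ * ‖z‖^(N-1) := by
    rw [← pow_succ']
    congr 1
    omega
  rw [hsplit] at hnorm
  have hzp : (0:ℝ) < ‖z‖^(N-1) := pow_pos hz0 _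
  have hA : L * ‖z‖ * ‖z‖^(N-1) ≤ B * ↑N * ‖z‖^(N-1) := by
    have := mul_le_mul_of_nonneg_right hLa
      (by positivity : (0:ℝ) ≤ ‖z‖ * ‖z‖^(N-1))
    nlinarith
  have hfin : L * ‖z‖ ≤ B * ↑N := le_of_mul_le_mul_right hA hzp
  refine le_trans ?_ (le_max_right 1 (B * N / L))
  rw [le_div_iff₀ hL]
  nlinarith

/-- product lower bound, real negative roots -/
lemma MB1 (R : Multiset ℝ) (h : ∀ r ∈ R, r < 0) (t : ℝ) (ht : 0 ≤ t) :
    t ^ Multiset.card R ≤ (R.map (fun r => t - r)).prod := by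
  induction R using Multiset.induction_on with
  | empty => simp
  | cons r R ih =>
    rw [Multiset.map_cons, Multiset.prod_cons, Multiset.card_cons, pow_succ']
    have hr : r < 0 := h r (Multiset.mem_cons_self r R)
    have hih := ih (fun x hx => h x (Multiset.mem_cons_of_mem hx))
    have h1 : t ≤ t - r := by linarith
    exact mul_le_mul h1 hih (pow_nonneg ht _) (by linarith)

lemma MB1pos (R : Multiset ℝ) (h : ∀ r ∈ R, r < 0) (t : ℝ) (ht : 0 ≤ t) :
    0 < (R.map (fun r => t - r)).prod := by
  induction R using Multiset.induction_on with
  | empty => simp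
  | cons r R ih =>
    rw [Multiset.map_cons, Multiset.prod_cons]
    have hr : r < 0 := h r (Multiset.mem_cons_self r R)
    exact mul_pos (by linarith) (ih (fun x hx => h x (Multiset.mem_cons_of_mem hx)))

/-- product lower bound, complex roots in open lower half plane -/
lemma MB2 (Z : Multiset ℂ) (h : ∀ z ∈ Z, z.im < 0) (w : ℂ) (hw : 0 ≤ w.im) :
    w.im ^ Multiset.card Z ≤ ‖(Z.map (fun z => w - z)).prod‖ := by
  induction Z using Multiset.induction_on with
  | empty => simp
  | cons z Z ih =>
    rw [Multiset.map_cons, Multiset.prod_cons, Multiset.card_cons, pow_succ', norm_mul]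
    have hz : z.im < 0 := h z (Multiset.mem_cons_self z Z)
    have hih := ih (fun x hx => h x (Multiset.mem_cons_of_mem hx))
    have h1 : w.im ≤ ‖w - z‖ := by
      have h2 : w.im ≤ (w - z).im := by
        rw [Complex.sub_im]
        linarith
      exact le_trans h2 (le_trans (le_abs_self _) (Complex.abs_im_le_norm _))
    exact mul_le_mul h1 hih (pow_nonneg hw _) (le_trans hw h1)

/-- the Garding cone predicate -/
def Gam (k : ℕ) (x : Fin m → ℝ) : Prop :=
  ∀ i, 1 ≤ i → i ≤ k → 0 < esymA Finset.univ i x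

lemma E1 {j : ℕ} (y : Fin m → ℝ) (hy : Gam j y) :
    ∀ s : ℝ, 0 ≤ s → 0 < esymA Finset.univ j (fun i => y i + s) := by
  intro s hs
  have hrw : esymA Finset.univ j (fun i => y i + s)
      = esymA Finset.univ j (fun i => y i + s * 1) :=
    congrArg _ (_root_.funext fun i => by ring)
  rw [hrw, FE]
  have hterm : ∀ d ∈ Finset.range (j+1),
      s^d * ∑ T ∈ Finset.univ.powersetCard d,
          (∏ i ∈ T, (1:ℝ)) * esymA (Finset.univ \ T) (j - d) y
        = s^d * ((((Finset.univ : Finset (Fin m)).card - (j - d)).choose d) •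
            esymA Finset.univ (j - d) y) := by
    intro d _
    rw [← CT]
    exact congrArg _ (Finset.sum_congr rfl fun T _ => by rw [Finset.prod_const_one, one_mul])
  rw [Finset.sum_congr rfl hterm]
  have hnn : ∀ d : ℕ, d ≤ j → 0 ≤ esymA (Finset.univ : Finset (Fin m)) d y := by
    intro d _
    rcases Nat.eq_zero_or_pos d with h | h
    · subst h; rw [esymA_zero]; norm_num
    · exact (hy d h (by omega)).le
  refine Finset.sum_pos' (fun d hd => ?_) ⟨0, by simp, ?_⟩
  · rw [Finset.mem_range] at hd
    exact mul_nonneg (pow_nonneg hs d) (nsmul_nonneg (hnn (j - d) (by omega)) _)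
  · simp only [pow_zero, Nat.sub_zero, Nat.choose_zero_right, one_smul, one_mul]
    rcases Nat.eq_zero_or_pos j with h | h
    · subst h; rw [esymA_zero]; norm_num
    · exact hy j h le_rfl

lemma E2 {j : ℕ} (hjm : j ≤ m) (v : Fin m → ℝ) (hv : Gam j v) :
    ∃ R : Multiset ℝ, Multiset.card R = j ∧ (∀ r ∈ R, r < 0) ∧
      (∀ s : ℝ, esymA Finset.univ j (fun i => v i + s)
          = ((Finset.univ : Finset (Fin m)).card.choose j : ℝ) * (R.map (fun r => s - r)).prod) ∧
      (∀ w : ℂ, esymA Finset.univ j (fun i => ((v i : ℂ) + w))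
          = ((Finset.univ : Finset (Fin m)).card.choose j : ℂ)
              * (R.map (fun r : ℝ => w - (r:ℂ))).prod) := by
  have hjA : j ≤ (Finset.univ : Finset (Fin m)).card := by simpa using hjm
  obtain ⟨R, hcard, hreal, hcplx⟩ := QP_fact Finset.univ hjA v
  refine ⟨R, hcard, ?_, hreal, hcplx⟩
  intro r hr
  by_contra hc
  push_neg at hc
  have hpos := E1 v hv r hc
  rw [hreal r] at hpos
  have hzero : (R.map (fun r' => r - r')).prod = 0 :=
    Multiset.prod_eq_zero (Multiset.mem_map.2 ⟨r, hr, sub_self r⟩)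
  rw [hzero, mul_zero] at hpos
  exact lt_irrefl 0 hpos

lemma PB {K : Type*} [NormedField K] (S : Finset (Fin m)) (b : Fin m → K) :
    ‖∏ i ∈ S, b i‖ ≤ ∏ i ∈ Finset.univ, max 1 ‖b i‖ := by
  rw [norm_prod]
  refine (Finset.prod_le_prod (fun i _ => norm_nonneg _)
    (fun i _ => le_max_right 1 ‖b i‖)).trans ?_
  have h1 : (0:ℝ) ≤ ∏ i ∈ S, max 1 ‖b i‖ :=
    Finset.prod_nonneg fun i _ => le_trans zero_le_one (le_max_left _ _)
  have h2 : (1:ℝ) ≤ ∏ i ∈ Finset.univ \ S, max 1 ‖b i‖ := by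
    calc (1:ℝ) = ∏ _i ∈ Finset.univ \ S, (1:ℝ) := (Finset.prod_const_one).symm
      _ ≤ _ := Finset.prod_le_prod (fun i _ => zero_le_one) (fun i _ => le_max_left _ _)
  calc ∏ i ∈ S, max 1 ‖b i‖ ≤ (∏ i ∈ Finset.univ \ S, max 1 ‖b i‖) * ∏ i ∈ S, max 1 ‖b i‖ :=
        le_mul_of_one_le_left h1 h2
    _ = ∏ i ∈ Finset.univ, max 1 ‖b i‖ := Finset.prod_sdiff (Finset.subset_univ S)

lemma PCB (A : Finset (Fin m)) (r : ℕ) : ((A.powersetCard r).card : ℝ) ≤ 2^m := by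
  have h1 : A.powersetCard r ⊆ (Finset.univ : Finset (Fin m)).powerset := by
    intro S hS
    rw [Finset.mem_powersetCard] at hS
    exact Finset.mem_powerset.2 (Finset.subset_univ S)
  have h2 := Finset.card_le_card h1
  rw [Finset.card_powerset, Finset.card_univ, Fintype.card_fin] at h2
  exact_mod_cast h2

lemma EB' {K : Type*} [NormedField K] (A : Finset (Fin m)) (r : ℕ) (z : Fin m → K) :
    ‖esymA A r z‖ ≤ (2:ℝ)^m * ∏ i ∈ Finset.univ, max 1 ‖z i‖ := by
  have hprod : (0:ℝ) ≤ ∏ i ∈ Finset.univ, max 1 ‖z i‖ :=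
    Finset.prod_nonneg fun i _ => le_trans zero_le_one (le_max_left _ _)
  refine (EB A r z).trans ?_
  exact mul_le_mul_of_nonneg_right (PCB A r) hprod

/-- coefficient bound for the `FE` expansion coefficients -/
lemma KB {K : Type*} [NormedField K] (A : Finset (Fin m)) (d r : ℕ) (b a : Fin m → K) :
    ‖∑ T ∈ A.powersetCard d, (∏ i ∈ T, b i) * esymA (A \ T) r a‖
      ≤ (2:ℝ)^m * ((∏ i ∈ Finset.univ, max 1 ‖b i‖)
          * ((2:ℝ)^m * ∏ i ∈ Finset.univ, max 1 ‖a i‖)) := by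
  have hb : (0:ℝ) ≤ ∏ i ∈ Finset.univ, max 1 ‖b i‖ :=
    Finset.prod_nonneg fun i _ => le_trans zero_le_one (le_max_left _ _)
  have ha : (0:ℝ) ≤ ∏ i ∈ Finset.univ, max 1 ‖a i‖ :=
    Finset.prod_nonneg fun i _ => le_trans zero_le_one (le_max_left _ _)
  refine (norm_sum_le _ _).trans ?_
  have hterm : ∀ T ∈ A.powersetCard d, ‖(∏ i ∈ T, b i) * esymA (A \ T) r a‖
      ≤ (∏ i ∈ Finset.univ, max 1 ‖b i‖) * ((2:ℝ)^m * ∏ i ∈ Finset.univ, max 1 ‖a i‖) := by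
    intro T _
    rw [norm_mul]
    exact mul_le_mul (PB T b) (EB' (A \ T) r a) (norm_nonneg _) hb
  calc ∑ T ∈ A.powersetCard d, ‖(∏ i ∈ T, b i) * esymA (A \ T) r a‖
      ≤ ∑ _T ∈ A.powersetCard d, (∏ i ∈ Finset.univ, max 1 ‖b i‖)
          * ((2:ℝ)^m * ∏ i ∈ Finset.univ, max 1 ‖a i‖) := Finset.sum_le_sum hterm
    _ = ((A.powersetCard d).card : ℝ) * ((∏ i ∈ Finset.univ, max 1 ‖b i‖)
          * ((2:ℝ)^m * ∏ i ∈ Finset.univ, max 1 ‖a i‖)) := by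
        rw [Finset.sum_const, nsmul_eq_mul]
    _ ≤ _ := by
        refine mul_le_mul_of_nonneg_right (PCB A d) ?_
        positivity

lemma esymA_tendsto {K : Type*} [CommRing K] [TopologicalSpace K] [IsTopologicalRing K]
    (A : Finset (Fin m)) (j : ℕ) (f : ℕ → Fin m → K) (g : Fin m → K)
    (h : ∀ i, Filter.Tendsto (fun n => f n i) Filter.atTop (nhds (g i))) :
    Filter.Tendsto (fun n => esymA A j (f n)) Filter.atTop (nhds (esymA A j g)) := by
  unfold esymA
  exact tendsto_finset_sum _ fun S _ =>
    tendsto_finset_prod _ fun i _ => h i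

lemma FEC {K : Type*} [CommRing K] (a b : Fin m → K) (j : ℕ) (t : K) :
    esymA Finset.univ j (fun i => a i + t * b i)
      = ∑ d ∈ Finset.range (j+1),
          (∑ T ∈ Finset.univ.powersetCard d,
            (∏ i ∈ T, b i) * esymA (Finset.univ \ T) (j - d) a) * t^d := by
  rw [FE]
  exact Finset.sum_congr rfl fun d _ => mul_comm _ _

lemma Kco_top {K : Type*} [CommRing K] (a b : Fin m → K) (j : ℕ) :
    ∑ T ∈ Finset.univ.powersetCard j, (∏ i ∈ T, b i) * esymA (Finset.univ \ T) (j - j) a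
      = esymA Finset.univ j b := by
  simp only [Nat.sub_self]
  rw [esymA]
  exact Finset.sum_congr rfl fun T _ => by rw [esymA_zero, mul_one]

/-- uniform root bound for zeros in a fixed direction -/
lemma rootB (a b : Fin m → ℂ) {j : ℕ} {z : ℂ}
    (hz : esymA Finset.univ j (fun i => a i + z * b i) = 0)
    (L Pa : ℝ) (hL : 0 < L) (hLb : L ≤ ‖esymA Finset.univ j b‖)
    (hPa : ∏ i ∈ Finset.univ, max 1 ‖a i‖ ≤ Pa) :
    ‖z‖ ≤ max 1 ((2:ℝ)^m * ((∏ i ∈ Finset.univ, max 1 ‖b i‖) * ((2:ℝ)^m * Pa)) * j / L) := by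
  have hPa0 : (0:ℝ) ≤ ∏ i ∈ Finset.univ, max 1 ‖a i‖ :=
    Finset.prod_nonneg fun i _ => le_trans zero_le_one (le_max_left _ _)
  have hPb0 : (0:ℝ) ≤ ∏ i ∈ Finset.univ, max 1 ‖b i‖ :=
    Finset.prod_nonneg fun i _ => le_trans zero_le_one (le_max_left _ _)
  refine RB j (fun d => ∑ T ∈ Finset.univ.powersetCard d,
    (∏ i ∈ T, b i) * esymA (Finset.univ \ T) (j - d) a) z ?_ L _ hL ?_ ?_
  · rw [← FEC]
    exact hz
  · beta_reduce
    rw [Kco_top]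
    exact hLb
  · intro d _
    refine (KB Finset.univ d (j - d) b a).trans ?_
    have h2m : (0:ℝ) ≤ (2:ℝ)^m := by positivity
    refine mul_le_mul_of_nonneg_left ?_ h2m
    exact mul_le_mul_of_nonneg_left (mul_le_mul_of_nonneg_left hPa h2m) hPb0

lemma P1 {j : ℕ} (hjm : j ≤ m) (x v : Fin m → ℝ) {c : ℝ} (hc : c ≠ 0) (t : ℝ) :
    esymA Finset.univ j (fun i => ((x i : ℂ) + (c:ℂ) * Complex.I) + (t:ℂ) * (v i : ℂ)) ≠ 0 := by
  have hjA : j ≤ (Finset.univ : Finset (Fin m)).card := by simpa using hjm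
  obtain ⟨Ry, hcard, hreal, hcplx⟩ := QP_fact Finset.univ hjA (fun i => x i + t * v i)
  have hrw : (fun i => ((x i : ℂ) + (c:ℂ) * Complex.I) + (t:ℂ) * (v i : ℂ))
      = fun i => (((fun i' => x i' + t * v i') i : ℝ) : ℂ) + (c:ℂ) * Complex.I := by
    funext i; push_cast; ring
  rw [hrw, hcplx ((c:ℂ) * Complex.I)]
  refine mul_ne_zero ?_ ?_
  · exact Nat.cast_ne_zero.2 (Nat.choose_pos hjA).ne'
  · refine Multiset.prod_ne_zero ?_
    intro h0
    rw [Multiset.mem_map] at h0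
    obtain ⟨r, _, hr⟩ := h0
    have him : ((c:ℂ) * Complex.I - (r:ℂ)).im = (0:ℂ).im := by rw [hr]
    simp only [Complex.sub_im, Complex.mul_im, Complex.ofReal_re, Complex.ofReal_im,
      Complex.I_im, Complex.I_re, Complex.zero_im, mul_one, mul_zero, zero_mul, add_zero,
      sub_zero] at him
    exact hc (by linarith)

lemma Ffact {j : ℕ} (v : Fin m → ℝ) (hσ : 0 < esymA Finset.univ j v) (aC : Fin m → ℂ) :
    ∃ Z : Multiset ℂ, Multiset.card Z = j ∧ ∀ t : ℂ,
      esymA Finset.univ j (fun i => aC i + t * (v i : ℂ))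
        = ((esymA Finset.univ j v : ℝ) : ℂ) * (Z.map (fun z => t - z)).prod := by
  have hσC : esymA Finset.univ j (fun i => ((v i : ℝ) : ℂ))
      = ((esymA Finset.univ j v : ℝ) : ℂ) := by
    have := esymA_hom Complex.ofRealHom Finset.univ j v
    simpa using this
  obtain ⟨Z, hZ, hid⟩ := VP_factC Finset.univ j aC (fun i => (v i : ℂ))
    (by rw [hσC]; exact_mod_cast hσ.ne')
  exact ⟨Z, hZ, fun t => by rw [hid t, hσC]⟩

lemma Flow {j : ℕ} (v : Fin m → ℝ) (hσ : 0 < esymA Finset.univ j v) (aC : Fin m → ℂ)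
    (hgood : ∀ z : ℂ, esymA Finset.univ j (fun i => aC i + z * (v i:ℂ)) = 0 → z.im < 0) :
    ∀ w : ℂ, 0 ≤ w.im →
      esymA Finset.univ j v * w.im^j
        ≤ ‖esymA Finset.univ j (fun i => aC i + w * (v i:ℂ))‖ := by
  obtain ⟨Z, hZcard, hid⟩ := Ffact v hσ aC
  intro w hw
  have hroots : ∀ z ∈ Z, z.im < 0 := by
    intro z hz
    refine hgood z ?_
    rw [hid z]
    exact mul_eq_zero_of_right _ (Multiset.prod_eq_zero (Multiset.mem_map.2 ⟨z, hz, sub_self z⟩))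
  rw [hid w, norm_mul]
  have h1' : ‖((esymA Finset.univ j v : ℝ):ℂ)‖ = esymA Finset.univ j v := by
    rw [Complex.norm_real]
    exact abs_of_pos hσ
  rw [h1']
  refine mul_le_mul_of_nonneg_left ?_ hσ.le
  have hmb := MB2 Z hroots w hw
  rwa [hZcard] at hmb

lemma ofReal_mul_im (r : ℝ) (z : ℂ) : ((r:ℂ) * z).im = r * z.im := by
  simp [Complex.mul_im]

lemma Gam_mono {k k' : ℕ} (h : k' ≤ k) {x : Fin m → ℝ} (hx : Gam k x) : Gam k' x :=
  fun i h1 hik => hx i h1 (hik.trans h)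

lemma L5 {j : ℕ} (h1 : 1 ≤ j) (hjm : j ≤ m) (v : Fin m → ℝ) (hv : Gam j v) (x : Fin m → ℝ) :
    ∃ R : Multiset ℝ, Multiset.card R = j ∧ ∀ t : ℝ,
      esymA Finset.univ j (fun i => x i + t * v i)
        = esymA Finset.univ j v * (R.map (fun r => t - r)).prod := by
  classical
  have hσ : 0 < esymA Finset.univ j v := hv j h1 le_rfl
  have hchooseC : ((Finset.univ : Finset (Fin m)).card.choose j : ℂ) ≠ 0 :=
    Nat.cast_ne_zero.2 (Nat.choose_pos (by simpa using hjm)).ne'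
  obtain ⟨Rv, hRvcard, hRvneg, hRvreal, hRvC⟩ := E2 hjm v hv
  set F : ℝ → ℂ → ℂ := fun c z =>
    esymA Finset.univ j (fun i => ((x i : ℂ) + (c:ℂ) * Complex.I) + z * (v i : ℂ)) with hF
  have hP1 : ∀ c : ℝ, c ≠ 0 → ∀ z : ℂ, z.im = 0 → F c z ≠ 0 := by
    intro c hc z hz
    have hzre : z = ((z.re : ℝ) : ℂ) := Complex.ext rfl (by simp [hz])
    rw [hF]
    simp only
    rw [hzre]
    exact P1 hjm x v hc z.re
  set Good : ℝ → Prop := fun c => ∀ z : ℂ, F c z = 0 → z.im < 0 with hGood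
  -- Step P3 : goodness for large c
  have hP3 : ∃ C1 : ℝ, 1 ≤ C1 ∧ ∀ c : ℝ, C1 ≤ c → Good c := by
    by_contra hcon
    push_neg at hcon
    have hseq : ∀ n : ℕ, ∃ c : ℝ, ((n:ℝ)+1) ≤ c ∧ ¬ Good c := by
      intro n
      obtain ⟨c, hc1, hc2⟩ := hcon (max 1 ((n:ℝ)+1)) (le_max_left _ _)
      exact ⟨c, le_trans (le_max_right _ _) hc1, hc2⟩
    choose cs hcs1 hcs2 using hseq
    have hcpos : ∀ n, (0:ℝ) < cs n := fun n => lt_of_lt_of_le (by positivity) (hcs1 n)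
    have hz : ∀ n, ∃ z : ℂ, F (cs n) z = 0 ∧ 0 ≤ z.im := by
      intro n
      have hn := hcs2 n
      simp only [hGood] at hn
      push_neg at hn
      obtain ⟨z, hz0, hzim⟩ := hn
      exact ⟨z, hz0, hzim⟩
    choose zs hzs0 hzsim using hz
    set u : ℕ → ℝ := fun n => (cs n)⁻¹ with hu
    set τ : ℕ → ℂ := fun n => ((u n : ℝ) : ℂ) * zs n with hτ
    have hu0 : ∀ n, 0 < u n := fun n => inv_pos.2 (hcpos n)
    have hule : ∀ n, u n ≤ 1/((n:ℝ)+1) := by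
      intro n
      rw [hu]
      simp only [one_div]
      exact inv_anti₀ (by positivity) (hcs1 n)
    have huten : Filter.Tendsto u Filter.atTop (nhds 0) :=
      squeeze_zero (fun n => (hu0 n).le) hule tendsto_one_div_add_atTop_nhds_zero_nat
    have hzero : ∀ n, esymA Finset.univ j
        (fun i => (((u n * x i : ℝ)):ℂ) + Complex.I + τ n * (v i:ℂ)) = 0 := by
      intro n
      have hcne : (cs n : ℝ) ≠ 0 := (hcpos n).ne'
      have hfun : (fun i => (((u n * x i : ℝ)):ℂ) + Complex.I + τ n * (v i:ℂ))
          = fun i => ((u n : ℝ):ℂ)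
              * (((x i : ℂ) + (cs n:ℂ) * Complex.I) + zs n * (v i : ℂ)) := by
        have hcu : (u n : ℝ) * cs n = 1 := inv_mul_cancel₀ hcne
        have hcuC : ((u n : ℝ):ℂ) * ((cs n : ℝ):ℂ) = 1 := by exact_mod_cast hcu
        funext i
        rw [hτ]
        simp only
        push_cast
        linear_combination (-Complex.I) * hcuC
      rw [hfun, esymA_smul]
      have hFn : (esymA Finset.univ j
          fun i => ((x i:ℂ) + (cs n:ℂ)*Complex.I) + zs n*(v i:ℂ)) = F (cs n) (zs n) := rfl
      rw [hFn, hzs0 n, mul_zero]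
    set Pa : ℝ := ∏ i ∈ Finset.univ, (|x i| + 1) with hPa
    set Rb : ℝ := max 1 ((2:ℝ)^m * ((∏ i ∈ Finset.univ, max 1 ‖((v i:ℝ):ℂ)‖)
      * ((2:ℝ)^m * Pa)) * j / (esymA Finset.univ j v)) with hRb
    have hσCnorm : (esymA Finset.univ j v : ℝ)
        ≤ ‖esymA Finset.univ j (fun i => ((v i : ℝ):ℂ))‖ := by
      have hh := esymA_hom Complex.ofRealHom Finset.univ j v
      simp only [Complex.ofRealHom_eq_coe] at hh
      rw [hh, Complex.norm_real]
      exact le_abs_self _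
    have hbound : ∀ n, ‖τ n‖ ≤ Rb := by
      intro n
      rw [hRb]
      refine rootB (fun i => (((u n * x i : ℝ)):ℂ) + Complex.I) (fun i => ((v i:ℝ):ℂ))
        (hzero n) (esymA Finset.univ j v) Pa hσ hσCnorm ?_
      refine Finset.prod_le_prod (fun i _ => le_trans zero_le_one (le_max_left _ _))
        (fun i _ => ?_)
      refine max_le (by linarith [abs_nonneg (x i)]) ?_
      refine (norm_add_le _ _).trans ?_
      rw [Complex.norm_real, Real.norm_eq_abs, Complex.norm_I, abs_mul]
      have : |u n| * |x i| ≤ 1 * |x i| := by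
        refine mul_le_mul_of_nonneg_right ?_ (abs_nonneg _)
        rw [abs_of_pos (hu0 n)]
        exact le_trans (hule n) (by
          rw [div_le_one (by positivity : (0:ℝ) < (n:ℝ)+1)]
          linarith [Nat.cast_nonneg (α := ℝ) n])
      linarith
    have hmem : ∀ n, τ n ∈ Metric.closedBall (0:ℂ) Rb := fun n => by
      rw [Metric.mem_closedBall, dist_zero_right]; exact hbound n
    obtain ⟨τs, _, φ, hφmono, hφten⟩ :=
      (isCompact_closedBall (0:ℂ) Rb).tendsto_subseq hmem
    have hcoord : ∀ i, Filter.Tendsto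
        (fun n => (((u (φ n) * x i : ℝ)):ℂ) + Complex.I + τ (φ n) * (v i:ℂ))
        Filter.atTop (nhds ((((0 * x i:ℝ)):ℂ) + Complex.I + τs * (v i:ℂ))) := by
      intro i
      refine Filter.Tendsto.add (Filter.Tendsto.add ?_ tendsto_const_nhds)
        (hφten.mul tendsto_const_nhds)
      exact (Complex.continuous_ofReal.tendsto _).comp
        ((huten.comp hφmono.tendsto_atTop).mul_const (x i))
    have hlim := esymA_tendsto Finset.univ j _ _ hcoord
    have hconst : (fun n => esymA Finset.univ j
        (fun i => (((u (φ n) * x i : ℝ)):ℂ) + Complex.I + τ (φ n) * (v i:ℂ)))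
        = fun _ => (0:ℂ) := funext fun n => hzero (φ n)
    rw [hconst] at hlim
    have hlimeq : esymA Finset.univ j
        (fun i => (((0 * x i:ℝ)):ℂ) + Complex.I + τs * (v i:ℂ)) = 0 :=
      (tendsto_nhds_unique tendsto_const_nhds hlim).symm
    have hsimp : esymA Finset.univ j (fun i => Complex.I + τs * (v i:ℂ)) = 0 := by
      rw [← hlimeq]
      exact congrArg _ (_root_.funext fun i => by push_cast; ring)
    have himτ : 0 ≤ τs.im := by
      refine ge_of_tendsto' ((Complex.continuous_im.tendsto _).comp hφten) (fun n => ?_)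
      have : (τ (φ n)).im = u (φ n) * (zs (φ n)).im := by
        rw [hτ]; simp only; rw [ofReal_mul_im]
      simp only [Function.comp_apply]
      rw [this]
      exact mul_nonneg (hu0 _).le (hzsim _)
    have hτne : τs ≠ 0 := by
      intro h0
      rw [h0] at hsimp
      have hconst2 : (fun i : Fin m => Complex.I + 0 * ((v i:ℝ):ℂ))
          = fun _ : Fin m => Complex.I * 1 := funext fun i => by ring
      rw [hconst2, esymA_smul, esymA_ones] at hsimp
      exact (mul_ne_zero (pow_ne_zero j Complex.I_ne_zero) hchooseC) hsimp
    have hrot : esymA Finset.univ j (fun i => Complex.I + τs * (v i:ℂ))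
        = τs^j * esymA Finset.univ j (fun i => ((v i:ℝ):ℂ) + Complex.I/τs) := by
      rw [← esymA_smul]
      refine congrArg _ (_root_.funext fun i => ?_)
      field_simp
      ring
    rw [hrot] at hsimp
    have hprod0 := (mul_eq_zero.1 hsimp).resolve_left (pow_ne_zero j hτne)
    rw [hRvC (Complex.I/τs)] at hprod0
    have hprod0' := (mul_eq_zero.1 hprod0).resolve_left hchooseC
    rw [Multiset.prod_eq_zero_iff] at hprod0'
    rw [Multiset.mem_map] at hprod0'
    obtain ⟨r, hrmem, hr0⟩ := hprod0'
    have hrneg := hRvneg r hrmem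
    have hIr : Complex.I = (r:ℂ) * τs := by
      have hdiv : Complex.I / τs = (r:ℂ) := sub_eq_zero.1 hr0
      rw [div_eq_iff hτne] at hdiv
      exact hdiv
    have him := congrArg Complex.im hIr
    rw [Complex.I_im, ofReal_mul_im] at him
    nlinarith
  obtain ⟨C1, hC1ge, hC1⟩ := hP3
  -- Step P4 : goodness for all positive c
  have hGoodPos : ∀ c : ℝ, 0 < c → Good c := by
    by_contra hcon
    push_neg at hcon
    obtain ⟨c0, hc0pos, hc0bad⟩ := hcon
    set Bset : Set ℝ := {c : ℝ | 0 < c ∧ ¬ Good c} with hBset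
    have hne : Bset.Nonempty := ⟨c0, hc0pos, hc0bad⟩
    have hbdd : ∀ c ∈ Bset, c ≤ C1 := by
      intro c hc
      by_contra hgtc
      push_neg at hgtc
      exact hc.2 (hC1 c hgtc.le)
    have hbddA : BddAbove Bset := ⟨C1, fun c hc => hbdd c hc⟩
    set cstar := sSup Bset with hcstar
    have hcstarpos : 0 < cstar := lt_of_lt_of_le hc0pos (le_csSup hbddA ⟨hc0pos, hc0bad⟩)
    have hgt : ∀ c : ℝ, cstar < c → Good c := by
      intro c hcgt
      by_contra hbad
      have hmem : c ∈ Bset := ⟨lt_trans hcstarpos hcgt, hbad⟩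
      exact absurd (le_csSup hbddA hmem) (not_le.2 hcgt)
    have hlowstar : ∀ w : ℂ, 0 ≤ w.im →
        esymA Finset.univ j v * w.im^j ≤ ‖F cstar w‖ := by
      intro w hw
      have hseq : ∀ n : ℕ, esymA Finset.univ j v * w.im^j
          ≤ ‖F (cstar + 1/((n:ℝ)+1)) w‖ := by
        intro n
        have hgood := hgt (cstar + 1/((n:ℝ)+1)) (by
          have : (0:ℝ) < 1/((n:ℝ)+1) := by positivity
          linarith)
        exact Flow v hσ (fun i => (x i:ℂ) + ((cstar + 1/((n:ℝ)+1) : ℝ):ℂ) * Complex.I)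
          (fun z hz => hgood z hz) w hw
      have hcten : Filter.Tendsto (fun n : ℕ => cstar + 1/((n:ℝ)+1))
          Filter.atTop (nhds cstar) := by
        have h2 := (tendsto_const_nhds :
          Filter.Tendsto (fun _ : ℕ => cstar) Filter.atTop (nhds cstar)).add
            tendsto_one_div_add_atTop_nhds_zero_nat
        simpa using h2
      have hten : Filter.Tendsto (fun n : ℕ => F (cstar + 1/((n:ℝ)+1)) w)
          Filter.atTop (nhds (F cstar w)) := by
        refine esymA_tendsto Finset.univ j _ _ (fun i => ?_)
        refine Filter.Tendsto.add (Filter.Tendsto.add tendsto_const_nhds ?_) tendsto_const_nhds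
        exact ((Complex.continuous_ofReal.tendsto _).comp hcten).mul tendsto_const_nhds
      exact ge_of_tendsto' hten.norm hseq
    have hbn : ∀ n : ℕ, ∃ b, b ∈ Bset ∧ cstar - 1/((n:ℝ)+1) < b := by
      intro n
      have hlt : cstar - 1/((n:ℝ)+1) < cstar := by
        have : (0:ℝ) < 1/((n:ℝ)+1) := by positivity
        linarith
      obtain ⟨b, hbmem, hblt⟩ := exists_lt_of_lt_csSup hne hlt
      exact ⟨b, hbmem, hblt⟩
    choose bs hbsmem hbslt using hbn
    have hbsle : ∀ n, bs n ≤ cstar := fun n => le_csSup hbddA (hbsmem n)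
    have hbspos : ∀ n, 0 < bs n := fun n => (hbsmem n).1
    have hbsten : Filter.Tendsto bs Filter.atTop (nhds cstar) := by
      refine tendsto_of_tendsto_of_tendsto_of_le_of_le ?_ tendsto_const_nhds
        (fun n => (hbslt n).le) hbsle
      have h2 := (tendsto_const_nhds :
        Filter.Tendsto (fun _ : ℕ => cstar) Filter.atTop (nhds cstar)).sub
          tendsto_one_div_add_atTop_nhds_zero_nat
      simpa using h2
    have hzb : ∀ n, ∃ z : ℂ, F (bs n) z = 0 ∧ 0 ≤ z.im := by
      intro n
      have hn := (hbsmem n).2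
      simp only [hGood] at hn
      push_neg at hn
      obtain ⟨z, hz0, hzim⟩ := hn
      exact ⟨z, hz0, hzim⟩
    choose zb hzb0 hzbim using hzb
    set Pa' : ℝ := ∏ i ∈ Finset.univ, (|x i| + C1) with hPa'
    set Rb' : ℝ := max 1 ((2:ℝ)^m * ((∏ i ∈ Finset.univ, max 1 ‖((v i:ℝ):ℂ)‖)
      * ((2:ℝ)^m * Pa')) * j / (esymA Finset.univ j v)) with hRb'
    have hσCnorm : (esymA Finset.univ j v : ℝ)
        ≤ ‖esymA Finset.univ j (fun i => ((v i : ℝ):ℂ))‖ := by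
      have hh := esymA_hom Complex.ofRealHom Finset.univ j v
      simp only [Complex.ofRealHom_eq_coe] at hh
      rw [hh, Complex.norm_real]
      exact le_abs_self _
    have hboundz : ∀ n, ‖zb n‖ ≤ Rb' := by
      intro n
      rw [hRb']
      have hzeq : esymA Finset.univ j
          (fun i => ((x i:ℂ) + ((bs n : ℝ):ℂ) * Complex.I) + zb n * ((v i:ℝ):ℂ)) = 0 :=
        hzb0 n
      refine rootB (fun i => (x i:ℂ) + ((bs n:ℝ):ℂ) * Complex.I) (fun i => ((v i:ℝ):ℂ))
        hzeq (esymA Finset.univ j v) Pa' hσ hσCnorm ?_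
      refine Finset.prod_le_prod (fun i _ => le_trans zero_le_one (le_max_left _ _))
        (fun i _ => ?_)
      refine max_le (by
        have : (1:ℝ) ≤ C1 := hC1ge
        have := abs_nonneg (x i)
        linarith) ?_
      refine (norm_add_le _ _).trans ?_
      rw [Complex.norm_real, Real.norm_eq_abs, norm_mul, Complex.norm_real,
        Real.norm_eq_abs, Complex.norm_I, mul_one]
      have : |bs n| ≤ C1 := by
        rw [abs_of_pos (hbspos n)]
        exact le_trans (hbsle n) (csSup_le hne hbdd)
      linarith
    have hmemz : ∀ n, zb n ∈ Metric.closedBall (0:ℂ) Rb' := fun n => by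
      rw [Metric.mem_closedBall, dist_zero_right]; exact hboundz n
    obtain ⟨zs, _, ψ, hψmono, hψten⟩ :=
      (isCompact_closedBall (0:ℂ) Rb').tendsto_subseq hmemz
    have hcoord : ∀ i, Filter.Tendsto
        (fun n => ((x i:ℂ) + ((bs (ψ n) : ℝ):ℂ) * Complex.I) + zb (ψ n) * ((v i:ℝ):ℂ))
        Filter.atTop (nhds (((x i:ℂ) + ((cstar:ℝ):ℂ) * Complex.I) + zs * ((v i:ℝ):ℂ))) := by
      intro i
      refine Filter.Tendsto.add (Filter.Tendsto.add tendsto_const_nhds ?_)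
        (hψten.mul tendsto_const_nhds)
      exact ((Complex.continuous_ofReal.tendsto _).comp
        (hbsten.comp hψmono.tendsto_atTop)).mul tendsto_const_nhds
    have hlim := esymA_tendsto Finset.univ j _ _ hcoord
    have hconst : (fun n => esymA Finset.univ j
        (fun i => ((x i:ℂ) + ((bs (ψ n) : ℝ):ℂ) * Complex.I) + zb (ψ n) * ((v i:ℝ):ℂ)))
        = fun _ => (0:ℂ) := funext fun n => hzb0 (ψ n)
    rw [hconst] at hlim
    have hFzero : F cstar zs = 0 := (tendsto_nhds_unique tendsto_const_nhds hlim).symm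
    have himzs : 0 ≤ zs.im := by
      refine ge_of_tendsto' ((Complex.continuous_im.tendsto _).comp hψten) (fun n => ?_)
      exact hzbim (ψ n)
    rcases eq_or_lt_of_le himzs with heq | hpos
    · exact hP1 cstar hcstarpos.ne' zs heq.symm hFzero
    · have hb := hlowstar zs himzs
      rw [hFzero, norm_zero] at hb
      nlinarith [pow_pos hpos j]
  -- Step P5 : conclusion at c = 0
  obtain ⟨Z0, hZ0card, hid0⟩ := Ffact v hσ (fun i => (x i:ℂ))
  set G : ℂ → ℂ := fun z => esymA Finset.univ j (fun i => (x i:ℂ) + z * ((v i:ℝ):ℂ)) with hG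
  have hnoUp : ∀ w : ℂ, 0 < w.im → G w ≠ 0 := by
    intro w hw hw0
    have hseq : ∀ n : ℕ, esymA Finset.univ j v * w.im^j ≤ ‖F (1/((n:ℝ)+1)) w‖ := by
      intro n
      exact Flow v hσ (fun i => (x i:ℂ) + ((1/((n:ℝ)+1) : ℝ):ℂ) * Complex.I)
        (fun z hz => hGoodPos (1/((n:ℝ)+1)) (by positivity) z hz) w hw.le
    have hten : Filter.Tendsto (fun n : ℕ => F (1/((n:ℝ)+1)) w)
        Filter.atTop (nhds (G w)) := by
      refine esymA_tendsto Finset.univ j _ _ (fun i => ?_)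
      have hc0 : Filter.Tendsto (fun n : ℕ => (1/((n:ℝ)+1) : ℝ))
          Filter.atTop (nhds 0) := tendsto_one_div_add_atTop_nhds_zero_nat
      have hmulI := (((Complex.continuous_ofReal.tendsto _).comp hc0).mul
        (tendsto_const_nhds : Filter.Tendsto (fun _ : ℕ => Complex.I)
          Filter.atTop (nhds Complex.I)))
      simp only [Complex.ofReal_zero, zero_mul] at hmulI
      have h3 := (tendsto_const_nhds : Filter.Tendsto (fun _ : ℕ => (x i:ℂ))
        Filter.atTop (nhds (x i:ℂ))).add hmulI
      simp only [add_zero] at h3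
      exact h3.add tendsto_const_nhds
    have hge := ge_of_tendsto' hten.norm hseq
    rw [hw0, norm_zero] at hge
    nlinarith [pow_pos hw j]
  have hrealroots : ∀ z ∈ Z0, z.im = 0 := by
    intro z hz
    have hGz : G z = 0 := by
      rw [hG]
      simp only
      rw [hid0 z]
      exact mul_eq_zero_of_right _
        (Multiset.prod_eq_zero (Multiset.mem_map.2 ⟨z, hz, sub_self z⟩))
    have hle : z.im ≤ 0 := by
      by_contra hgt2
      push_neg at hgt2
      exact hnoUp z hgt2 hGz
    rcases eq_or_lt_of_le hle with heq | hlt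
    · exact heq
    · exfalso
      have hconjz : G ((starRingEnd ℂ) z) = (starRingEnd ℂ) (G z) := by
      -- conj commutes
        rw [hG]
        simp only
        have hh := esymA_hom (starRingEnd ℂ) Finset.univ j
          (fun i => (x i:ℂ) + z * ((v i:ℝ):ℂ))
        rw [← hh]
        exact congrArg _ (_root_.funext fun i => by
          simp [map_add, map_mul, Complex.conj_ofReal])
      have : G ((starRingEnd ℂ) z) = 0 := by rw [hconjz, hGz, map_zero]
      exact hnoUp ((starRingEnd ℂ) z) (by
        rw [Complex.conj_im]
        linarith) this
  refine ⟨Z0.map Complex.re, by rw [Multiset.card_map, hZ0card], fun t => ?_⟩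
  have hcast : ((esymA Finset.univ j (fun i => x i + t * v i) : ℝ) : ℂ) = G ((t:ℝ):ℂ) := by
    have hh := esymA_hom Complex.ofRealHom Finset.univ j (fun i => x i + t * v i)
    simp only [Complex.ofRealHom_eq_coe] at hh
    rw [← hh, hG]
    exact congrArg _ (_root_.funext fun i => by push_cast; ring)
  have hGfact : G ((t:ℝ):ℂ)
      = ((esymA Finset.univ j v : ℝ):ℂ)
          * (Z0.map (fun z => (((t - z.re : ℝ)):ℂ))).prod := by
    rw [hG]
    simp only
    rw [hid0 ((t:ℝ):ℂ)]
    refine congrArg _ (congrArg Multiset.prod (Multiset.map_congr rfl fun z hz => ?_))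
    have hz0 := hrealroots z hz
    have hzre : z = ((z.re : ℝ):ℂ) := Complex.ext rfl (by simp [hz0])
    conv_lhs => rw [hzre]
    push_cast
    ring
  have hpush : (Z0.map (fun z => (((t - z.re : ℝ)):ℂ))).prod
      = (((Z0.map Complex.re).map (fun r => t - r)).map (fun q : ℝ => ((q:ℝ):ℂ))).prod := by
    rw [Multiset.map_map, Multiset.map_map]
    rfl
  have hofreal : (((Z0.map Complex.re).map (fun r => t - r)).map (fun q : ℝ => ((q:ℝ):ℂ))).prod
      = ((((Z0.map Complex.re).map (fun r => t - r)).prod : ℝ) : ℂ) := by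
    have hmp := map_multiset_prod Complex.ofRealHom
      (((Z0.map Complex.re).map (fun r => t - r)))
    simpa [Complex.ofRealHom_eq_coe] using hmp.symm
  apply Complex.ofReal_injective
  rw [hcast, hGfact, hpush, hofreal]
  push_cast
  ring

lemma main_level {j : ℕ} (h1 : 1 ≤ j) (hjm : j ≤ m) (y v : Fin m → ℝ)
    (hy : Gam j y) (hv : Gam j v) :
    ∀ t : ℝ, 0 ≤ t → 0 < esymA Finset.univ j (fun i => y i + t * v i) := by
  classical
  have hσ : 0 < esymA Finset.univ j v := hv j h1 le_rfl
  set g : ℝ → ℝ → ℝ := fun s t => esymA Finset.univ j (fun i => (y i + s) + t * v i) with hg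
  set c : ℕ → ℝ → ℝ := fun d s => ∑ T ∈ Finset.univ.powersetCard d,
    (∏ i ∈ T, v i) * esymA (Finset.univ \ T) (j - d) (fun i => y i + s) with hc
  have hIDT : ∀ s t, g s t = ∑ d ∈ Finset.range (j+1), c d s * t^d := by
    intro s t
    exact FEC (fun i => y i + s) v j t
  set K : ℕ → ℕ → ℝ := fun d d' => ∑ T ∈ Finset.univ.powersetCard d,
    (∏ i ∈ T, v i) * (∑ U ∈ (Finset.univ \ T).powersetCard d',
      esymA ((Finset.univ \ T) \ U) (j - d - d') y) with hK
  have hIDS : ∀ d s, c d s = ∑ d' ∈ Finset.range ((j-d)+1), K d d' * s^d' := by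
    intro d s
    rw [hc]
    simp only
    have hT : ∀ T ∈ Finset.univ.powersetCard d,
        (∏ i ∈ T, v i) * esymA (Finset.univ \ T) (j-d) (fun i => y i + s)
        = ∑ d' ∈ Finset.range ((j-d)+1), s^d' * ((∏ i ∈ T, v i)
            * ∑ U ∈ (Finset.univ \ T).powersetCard d',
                esymA ((Finset.univ \ T) \ U) (j - d - d') y) := by
      intro T _
      have hcong : esymA (Finset.univ \ T) (j-d) (fun i => y i + s)
          = esymA (Finset.univ \ T) (j-d) (fun i => y i + s * 1) :=
        congrArg _ (_root_.funext fun i => by ring)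
      rw [hcong, FE, Finset.mul_sum]
      refine Finset.sum_congr rfl fun d' _ => ?_
      have hone : ∑ U ∈ (Finset.univ \ T).powersetCard d',
          (∏ i ∈ U, (1:ℝ)) * esymA ((Finset.univ \ T) \ U) (j - d - d') y
          = ∑ U ∈ (Finset.univ \ T).powersetCard d',
              esymA ((Finset.univ \ T) \ U) (j - d - d') y :=
        Finset.sum_congr rfl fun U _ => by rw [Finset.prod_const_one, one_mul]
      rw [hone]
      ring
    rw [Finset.sum_congr rfl hT, Finset.sum_comm]
    refine Finset.sum_congr rfl fun d' _ => ?_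
    rw [hK]
    simp only
    rw [Finset.sum_mul]
    refine Finset.sum_congr rfl fun T _ => by ring
  have hKtop : ∀ d, d ≤ j → K d (j-d) = (((m - d).choose (j-d) : ℕ) : ℝ)
      * esymA Finset.univ d v := by
    intro d hd
    rw [hK]
    simp only
    have hT : ∀ T ∈ Finset.univ.powersetCard d,
        (∏ i ∈ T, v i) * (∑ U ∈ (Finset.univ \ T).powersetCard (j-d),
          esymA ((Finset.univ \ T) \ U) (j - d - (j-d)) y)
        = (((m - d).choose (j-d) : ℕ) : ℝ) * ∏ i ∈ T, v i := by
      intro T hTmem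
      rw [Finset.mem_powersetCard] at hTmem
      have hzero : j - d - (j - d) = 0 := by omega
      rw [hzero]
      have hsum : ∑ U ∈ (Finset.univ \ T).powersetCard (j-d),
          esymA ((Finset.univ \ T) \ U) 0 y
          = (((Finset.univ \ T).powersetCard (j-d)).card : ℝ) := by
        rw [Finset.sum_congr rfl (fun U _ => esymA_zero _ y), Finset.sum_const,
          nsmul_eq_mul, mul_one]
      rw [hsum, Finset.card_powersetCard, Finset.card_sdiff_of_subset hTmem.1, hTmem.2]
      rw [Finset.card_univ, Fintype.card_fin]
      ring
    rw [Finset.sum_congr rfl hT, ← Finset.mul_sum]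
    rfl
  have hesym_pos : ∀ d, d ≤ j → 0 < esymA (Finset.univ : Finset (Fin m)) d v := by
    intro d hd
    rcases Nat.eq_zero_or_pos d with h0 | h0
    · subst h0; rw [esymA_zero]; norm_num
    · exact hv d h0 hd
  have hKtop_pos : ∀ d, d ≤ j → 0 < K d (j-d) := by
    intro d hd
    rw [hKtop d hd]
    refine mul_pos ?_ (hesym_pos d hd)
    exact_mod_cast Nat.choose_pos (by omega)
  -- large-s positivity
  have hS0 : ∃ S0 : ℝ, 0 ≤ S0 ∧ ∀ s, S0 ≤ s → ∀ d, d ≤ j → 0 < c d s := by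
    refine ⟨∑ d ∈ Finset.range (j+1),
      max 1 (((∑ d' ∈ Finset.range ((j-d)+1), |K d d'|) * ((j-d : ℕ) : ℝ) + 1)
        /(K d (j-d))), ?_, ?_⟩
    · exact Finset.sum_nonneg fun d _ => le_trans zero_le_one (le_max_left _ _)
    intro s hs d hd
    rw [hIDS d s]
    refine EPB (j-d) (fun d' => K d d') (K d (j-d))
      (∑ d' ∈ Finset.range ((j-d)+1), |K d d'|) (hKtop_pos d hd) le_rfl ?_ s
      (le_trans ?_ hs)
    · intro i hi
      refine Finset.single_le_sum (f := fun d' => |K d d'|) (fun d' _ => abs_nonneg _) ?_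
      rw [Finset.mem_range]
      omega
    · refine Finset.single_le_sum
        (f := fun d => max 1 (((∑ d' ∈ Finset.range ((j-d)+1), |K d d'|)
          * ((j-d : ℕ) : ℝ) + 1)/(K d (j-d))))
        (fun e _ => le_trans zero_le_one (le_max_left _ _)) ?_
      rw [Finset.mem_range]
      omega
  obtain ⟨S0, hS00, hS0⟩ := hS0
  set P : ℝ → Prop := fun s => ∀ t, 0 ≤ t → 0 < g s t with hP
  have hlarge : ∀ s, S0 ≤ s → P s := by
    intro s hs t ht
    rw [hIDT]
    refine Finset.sum_pos' (fun d hd => ?_) ⟨0, by simp, ?_⟩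
    · rw [Finset.mem_range] at hd
      exact mul_nonneg (hS0 s hs d (by omega)).le (pow_nonneg ht d)
    · rw [pow_zero, mul_one]
      exact hS0 s hs 0 (by omega)
  have hE1g : ∀ s, 0 ≤ s → 0 < g s 0 := by
    intro s hs
    have := E1 y hy s hs
    have hcong : g s 0 = esymA Finset.univ j (fun i => y i + s) := by
      show esymA Finset.univ j (fun i => y i + s + 0 * v i) = _
      exact congrArg (esymA Finset.univ j) (_root_.funext fun i => by ring)
    rw [hcong]
    exact this
  have hlimit : ∀ (sq : ℕ → ℝ) (s' : ℝ), 0 ≤ s' →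
      Filter.Tendsto sq Filter.atTop (nhds s') → (∀ n, P (sq n)) → P s' := by
    intro sq s' hs' hten hPsq t ht
    rcases eq_or_lt_of_le ht with h0 | hpos
    · rw [← h0]
      exact hE1g s' hs'
    have hb : ∀ n, esymA Finset.univ j v * t^j ≤ g (sq n) t := by
      intro n
      obtain ⟨R, hRcard, hRid⟩ := L5 h1 hjm v hv (fun i => y i + sq n)
      have hneg : ∀ r ∈ R, r < 0 := by
        intro r hr
        by_contra hge
        push_neg at hge
        have hgr := hPsq n r hge
        have hgid : g (sq n) r = esymA Finset.univ j v
            * (R.map (fun r' => r - r')).prod := hRid r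
        rw [hgid, Multiset.prod_eq_zero (Multiset.mem_map.2 ⟨r, hr, sub_self r⟩),
          mul_zero] at hgr
        exact lt_irrefl 0 hgr
      have hgid : g (sq n) t = esymA Finset.univ j v
          * (R.map (fun r' => t - r')).prod := hRid t
      rw [hgid]
      have hmb := MB1 R hneg t ht
      rw [hRcard] at hmb
      exact mul_le_mul_of_nonneg_left hmb hσ.le
    have hten2 : Filter.Tendsto (fun n => g (sq n) t) Filter.atTop (nhds (g s' t)) := by
      refine esymA_tendsto Finset.univ j _ _ (fun i => ?_)
      exact ((tendsto_const_nhds.add hten).add tendsto_const_nhds)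
    have hge := ge_of_tendsto' hten2 hb
    exact lt_of_lt_of_le (mul_pos hσ (pow_pos hpos j)) hge
  -- conclusion: P 0
  have hP0 : P 0 := by
    by_contra hnp0
    set Bad : Set ℝ := {s : ℝ | 0 ≤ s ∧ ¬ P s} with hBad
    have hne : Bad.Nonempty := ⟨0, le_rfl, hnp0⟩
    have hbdd : ∀ s ∈ Bad, s ≤ S0 := by
      intro s hs
      by_contra hgt
      push_neg at hgt
      exact hs.2 (hlarge s hgt.le)
    have hbddA : BddAbove Bad := ⟨S0, fun s hs => hbdd s hs⟩
    set sstar := sSup Bad with hsstar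
    have hstar0 : 0 ≤ sstar := le_csSup hbddA ⟨le_rfl, hnp0⟩
    have hstarle : sstar ≤ S0 := csSup_le hne hbdd
    have hPgt : ∀ s, sstar < s → P s := by
      intro s hsgt
      by_contra hnp
      have : s ∈ Bad := ⟨le_trans hstar0 hsgt.le, hnp⟩
      exact absurd (le_csSup hbddA this) (not_le.2 hsgt)
    have hPstar : P sstar := by
      refine hlimit (fun n => sstar + 1/((n:ℝ)+1)) sstar hstar0 ?_ ?_
      · have h2 := (tendsto_const_nhds :
          Filter.Tendsto (fun _ : ℕ => sstar) Filter.atTop (nhds sstar)).add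
            tendsto_one_div_add_atTop_nhds_zero_nat
        simpa using h2
      · intro n
        refine hPgt _ ?_
        have : (0:ℝ) < 1/((n:ℝ)+1) := by positivity
        linarith
    -- uniform t bound
    set MS : ℝ := max 1 sstar with hMS
    set D : ℝ := ∑ d ∈ Finset.range (j+1),
      (∑ d' ∈ Finset.range ((j-d)+1), |K d d'|) * MS^j with hD
    have hcjs : ∀ s : ℝ, c j s = esymA Finset.univ j v := by
      intro s
      rw [hIDS j s]
      have hjj : j - j = 0 := by omega
      rw [hjj]
      rw [Finset.sum_range_one, pow_zero, mul_one]
      have := hKtop j le_rfl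
      rw [hjj] at this
      rw [this, Nat.choose_zero_right]
      norm_num
    have hcbound : ∀ s : ℝ, 0 ≤ s → s ≤ sstar → ∀ d, d < j → |c d s| ≤ D := by
      intro s hs0 hsle d hd
      have hone : |c d s| ≤ (∑ d' ∈ Finset.range ((j-d)+1), |K d d'|) * MS^j := by
        rw [hIDS d s]
        refine (Finset.abs_sum_le_sum_abs _ _).trans ?_
        rw [Finset.sum_mul]
        refine Finset.sum_le_sum fun d' hd' => ?_
        rw [Finset.mem_range] at hd'
        rw [abs_mul, abs_pow]
        refine mul_le_mul_of_nonneg_left ?_ (abs_nonneg _)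
        have h1' : |s| ≤ MS := by
          rw [abs_of_nonneg hs0]
          exact le_trans hsle (le_max_right _ _)
        have h2' : |s|^d' ≤ MS^d' := pow_le_pow_left₀ (abs_nonneg s) h1' d'
        have h3' : MS^d' ≤ MS^j := pow_le_pow_right₀ (le_max_left _ _) (by omega)
        exact h2'.trans h3'
      refine hone.trans ?_
      rw [hD]
      refine Finset.single_le_sum (f := fun d => (∑ d' ∈ Finset.range ((j-d)+1), |K d d'|)
        * MS^j) (fun e _ => ?_) (by rw [Finset.mem_range]; omega)
      refine mul_nonneg (Finset.sum_nonneg fun _ _ => abs_nonneg _) ?_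
      positivity
    have hTpos : ∀ s, 0 ≤ s → s ≤ sstar → ∀ t, max 1 ((D*j+1)/(esymA Finset.univ j v)) ≤ t
        → 0 < g s t := by
      intro s hs0 hsle t htge
      rw [hIDT]
      refine EPB j (fun d => c d s) (esymA Finset.univ j v) D hσ ?_ ?_ t htge
      · show esymA Finset.univ j v ≤ c j s
        rw [hcjs s]
      · intro i hi
        exact hcbound s hs0 hsle i hi
    set T0 : ℝ := max 1 ((D*j+1)/(esymA Finset.univ j v)) with hT0
    -- bad sequence approaching sstar
    have hbn : ∀ n : ℕ, ∃ b, b ∈ Bad ∧ sstar - 1/((n:ℝ)+1) < b := by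
      intro n
      have hlt : sstar - 1/((n:ℝ)+1) < sstar := by
        have : (0:ℝ) < 1/((n:ℝ)+1) := by positivity
        linarith
      exact exists_lt_of_lt_csSup hne hlt
    choose bs hbsmem hbslt using hbn
    have hbsle : ∀ n, bs n ≤ sstar := fun n => le_csSup hbddA (hbsmem n)
    have hbs0 : ∀ n, 0 ≤ bs n := fun n => (hbsmem n).1
    have hbsten : Filter.Tendsto bs Filter.atTop (nhds sstar) := by
      refine tendsto_of_tendsto_of_tendsto_of_le_of_le ?_ tendsto_const_nhds
        (fun n => (hbslt n).le) hbsle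
      have h2 := (tendsto_const_nhds :
        Filter.Tendsto (fun _ : ℕ => sstar) Filter.atTop (nhds sstar)).sub
          tendsto_one_div_add_atTop_nhds_zero_nat
      simpa using h2
    have hts : ∀ n, ∃ t, 0 ≤ t ∧ g (bs n) t ≤ 0 := by
      intro n
      have hn := (hbsmem n).2
      simp only [hP] at hn
      push_neg at hn
      obtain ⟨t, ht0, htle⟩ := hn
      exact ⟨t, ht0, htle⟩
    choose ts hts0 htsle using hts
    have htbound : ∀ n, ts n ∈ Set.Icc (0:ℝ) T0 := by
      intro n
      refine ⟨hts0 n, ?_⟩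
      by_contra hgt
      push_neg at hgt
      have := hTpos (bs n) (hbs0 n) (hbsle n) (ts n) (le_of_lt (lt_of_le_of_lt le_rfl hgt))
      · linarith [htsle n]
    obtain ⟨tstar, htstarmem, ψ, hψmono, hψten⟩ :=
      (isCompact_Icc : IsCompact (Set.Icc (0:ℝ) T0)).tendsto_subseq htbound
    have hlim : Filter.Tendsto (fun n => g (bs (ψ n)) (ts (ψ n))) Filter.atTop
        (nhds (g sstar tstar)) := by
      refine esymA_tendsto Finset.univ j _ _ (fun i => ?_)
      refine Filter.Tendsto.add
        (Filter.Tendsto.add tendsto_const_nhds (hbsten.comp hψmono.tendsto_atTop))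
        (hψten.mul tendsto_const_nhds)
    have hle0 : g sstar tstar ≤ 0 :=
      le_of_tendsto hlim (Filter.Eventually.of_forall fun n => htsle (ψ n))
    exact absurd (hPstar tstar htstarmem.1) (not_lt.2 hle0)
  intro t ht
  have := hP0 t ht
  have hcong : g 0 t = esymA Finset.univ j (fun i => y i + t * v i) := by
    show esymA Finset.univ j (fun i => y i + 0 + t * v i) = _
    exact congrArg (esymA Finset.univ j) (_root_.funext fun i => by ring)
  rw [hcong] at this
  exact this

end Gard

theorem gardingCone_convexCone (n k : ℕ) (Λ M : Fin (n - 1) → ℝ)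
    (hΛ : Λ ∈ GardingCone (n - 1) k) (hM : M ∈ GardingCone (n - 1) k) :
    Λ + M ∈ GardingCone (n - 1) k ∧ ∀ t : ℝ, 0 < t → t • Λ ∈ GardingCone (n - 1) k := by
  constructor
  · intro j hj1 hjk
    by_cases hjm : j ≤ n - 1
    · have hGΛ : Gard.Gam j Λ := fun i hi1 hij => hΛ i hi1 (hij.trans hjk)
      have hGM : Gard.Gam j M := fun i hi1 hij => hM i hi1 (hij.trans hjk)
      have hmain := Gard.main_level hj1 hjm Λ M hGΛ hGM 1 zero_le_one
      have hcong : Gard.esymA Finset.univ j (fun i => Λ i + 1 * M i) = esymmF (Λ + M) j := by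
        show Gard.esymA Finset.univ j (fun i => Λ i + 1 * M i)
          = Gard.esymA Finset.univ j (fun i => Λ i + M i)
        exact congrArg _ (funext fun i => by ring)
      rw [← hcong]
      exact hmain
    · push_neg at hjm
      have hzero : esymmF Λ j = 0 := by
        refine Gard.esymA_of_card_lt ?_ Λ
        rw [Finset.card_univ, Fintype.card_fin]
        omega
      have := hΛ j hj1 hjk
      rw [hzero] at this
      exact absurd this (lt_irrefl 0)
  · intro t ht j hj1 hjk
    have hpos := hΛ j hj1 hjk
    have hsmul : esymmF (t • Λ) j = t^j * esymmF Λ j := by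
      show Gard.esymA Finset.univ j (fun i => t * Λ i) = _
      exact Gard.esymA_smul _ _ _ _
    rw [hsmul]
    exact mul_pos (pow_pos ht j) hpos
end

section
/- Positive definiteness of Newton tensors on the Gårding cone: if a symmetric (n-1)×(n-1) matrix B has eigenvalues in Γ_k (i.e., σ_j(B) > 0 for all j ≤ k), then the Newton tensor T_{k-1}(B) is positive definite; in particular T_{k-1}(B)(v, v) ≥ 0 for all vectors v. -/
/-- `σ_k(B)`: the `k`-th elementary symmetric function of the eigenvalues of `B`,
read off from the characteristic polynomial. -/
noncomputable def msigma {m : ℕ} (k : ℕ) (B : Matrix (Fin m) (Fin m) ℝ) : ℝ :=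
  (-1) ^ k * B.charpoly.coeff (m - k)

/-- The `k`-th Newton transformation, `(T_k)ⁱⱼ(B) = ∂σ_{k+1}/∂bⁱⱼ (B)`,
defined via directional derivatives. -/
noncomputable def newtonT {m : ℕ} (k : ℕ) (B : Matrix (Fin m) (Fin m) ℝ) :
    Matrix (Fin m) (Fin m) ℝ :=
  fun i j => deriv (fun t : ℝ => msigma (k + 1) (B + t • Matrix.single i j 1)) 0
open Polynomial
namespace NewtonAux



/-! ### Multiset esymm basics -/

lemma multiset_sum_nonneg (s : Multiset ℝ) (h : ∀ x ∈ s, 0 ≤ x) : 0 ≤ s.sum := by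
  induction s using Multiset.induction with
  | empty => simp
  | cons a t ih =>
    rw [Multiset.sum_cons]
    exact add_nonneg (h a (Multiset.mem_cons_self a t))
      (ih fun x hx => h x (Multiset.mem_cons_of_mem hx))

lemma multiset_sum_pos (s : Multiset ℝ) (h : ∀ x ∈ s, 0 < x) (h0 : s ≠ 0) : 0 < s.sum := by
  induction s using Multiset.induction with
  | empty => exact absurd rfl h0
  | cons a t ih =>
    rw [Multiset.sum_cons]
    exact add_pos_of_pos_of_nonneg (h a (Multiset.mem_cons_self a t))
      (multiset_sum_nonneg t fun x hx => (h x (Multiset.mem_cons_of_mem hx)).le)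

lemma esymm_zero' (s : Multiset ℝ) : s.esymm 0 = 1 := by
  simp [Multiset.esymm, Multiset.powersetCard_zero_left]

lemma esymm_eq_zero_of_card_lt {s : Multiset ℝ} {j : ℕ} (h : Multiset.card s < j) :
    s.esymm j = 0 := by
  simp [Multiset.esymm, Multiset.powersetCard_eq_empty _ h]

lemma esymm_pos {s : Multiset ℝ} (hs : ∀ x ∈ s, 0 < x) {j : ℕ} (hj : j ≤ Multiset.card s) :
    0 < s.esymm j := by
  apply multiset_sum_pos
  · intro x hx
    rw [Multiset.mem_map] at hx
    obtain ⟨t, ht, rfl⟩ := hx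
    rw [Multiset.mem_powersetCard] at ht
    exact Multiset.prod_pos fun y hy => hs y (Multiset.mem_of_le ht.1 hy)
  · intro h0
    have := congrArg Multiset.card h0
    simp only [Multiset.card_map, Multiset.card_powersetCard, Multiset.card_zero] at this
    exact absurd this (Nat.choose_pos hj |>.ne')

lemma esymm_cons (x : ℝ) (t : Multiset ℝ) (j : ℕ) :
    (x ::ₘ t).esymm (j + 1) = t.esymm (j + 1) + x * t.esymm j := by
  rw [Multiset.esymm, Multiset.powersetCard_cons, Multiset.map_add, Multiset.sum_add,
    Multiset.map_map]
  congr 1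
  rw [Multiset.esymm, ← Multiset.sum_map_mul_left]
  exact congrArg Multiset.sum
    (Multiset.map_congr rfl fun u _ => by simp [Multiset.prod_cons])




/-- associated polynomial `∏ (X + r)` of a real multiset -/
noncomputable def Pm (s : Multiset ℝ) : ℝ[X] := (s.map fun r => X + C r).prod

lemma Pm_eq_prod_X_sub_C (s : Multiset ℝ) :
    Pm s = ((s.map (fun r => -r)).map fun r => X - C r).prod := by
  rw [Pm, Multiset.map_map]
  exact congrArg Multiset.prod (Multiset.map_congr rfl fun r _ => by
    simp [sub_neg_eq_add])

lemma Pm_monic (s : Multiset ℝ) : (Pm s).Monic :=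
  monic_multiset_prod_of_monic s _ fun r _ => monic_X_add_C r

lemma Pm_natDegree (s : Multiset ℝ) : (Pm s).natDegree = Multiset.card s := by
  rw [Pm, natDegree_multiset_prod_of_monic _ (fun f hf => by
    rw [Multiset.mem_map] at hf; obtain ⟨r, _, rfl⟩ := hf; exact monic_X_add_C r)]
  rw [Multiset.map_map]
  simp [Function.comp_def, natDegree_X_add_C]

lemma Pm_ne_zero (s : Multiset ℝ) : Pm s ≠ 0 := (Pm_monic s).ne_zero

lemma Pm_roots (s : Multiset ℝ) : (Pm s).roots = s.map fun r => -r := by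
  rw [Pm_eq_prod_X_sub_C, roots_multiset_prod_X_sub_C]

lemma Pm_coeff (s : Multiset ℝ) {j : ℕ} (hj : j ≤ Multiset.card s) :
    (Pm s).coeff (Multiset.card s - j) = s.esymm j := by
  rw [Pm, Multiset.prod_X_add_C_coeff s (Nat.sub_le _ _),
    Nat.sub_sub_self hj]

/-- real-rootedness -/
def RR (p : ℝ[X]) : Prop := p ≠ 0 ∧ Multiset.card p.roots = p.natDegree

lemma RR_Pm (s : Multiset ℝ) : RR (Pm s) :=
  ⟨Pm_ne_zero s, by rw [Pm_roots, Pm_natDegree, Multiset.card_map]⟩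

lemma RR.deriv {p : ℝ[X]} (hp : RR p) (hd : p.natDegree ≠ 0) :
    RR (Polynomial.derivative p) ∧ (Polynomial.derivative p).natDegree = p.natDegree - 1 := by
  have hcoeff : (Polynomial.derivative p).coeff (p.natDegree - 1) ≠ 0 := by
    rw [coeff_derivative]
    have h1 : p.natDegree - 1 + 1 = p.natDegree := Nat.succ_pred_eq_of_pos (Nat.pos_of_ne_zero hd)
    rw [h1]
    refine mul_ne_zero (mt leadingCoeff_eq_zero.mp hp.1) ?_
    positivity
  have hne : Polynomial.derivative p ≠ 0 := fun h => hcoeff (by simp [h])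
  have hle : (Polynomial.derivative p).natDegree ≤ p.natDegree - 1 := natDegree_derivative_le p
  have hge : p.natDegree - 1 ≤ (Polynomial.derivative p).natDegree := le_natDegree_of_ne_zero hcoeff
  have hdeg : (Polynomial.derivative p).natDegree = p.natDegree - 1 := le_antisymm hle hge
  refine ⟨⟨hne, le_antisymm ?_ ?_⟩, hdeg⟩
  · rw [hdeg]
    calc Multiset.card (Polynomial.derivative p).roots
        ≤ (Polynomial.derivative p).natDegree := (Polynomial.derivative p).card_roots'
      _ = p.natDegree - 1 := hdeg
  · rw [hdeg, ← hp.2]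
    exact Nat.sub_le_of_le_add (p.card_roots_le_derivative)

lemma RR.iterate {p : ℝ[X]} (hp : RR p) (d : ℕ) (hd : d ≤ p.natDegree) :
    RR (Polynomial.derivative^[d] p) ∧
      (Polynomial.derivative^[d] p).natDegree = p.natDegree - d := by
  induction d with
  | zero => exact ⟨hp, by simp⟩
  | succ d ih =>
    have hd' : d ≤ p.natDegree := Nat.le_of_succ_le hd
    obtain ⟨h1, h2⟩ := ih hd'
    have hnd : (Polynomial.derivative^[d] p).natDegree ≠ 0 := by
      rw [h2]; omega
    obtain ⟨h3, h4⟩ := h1.deriv hnd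
    refine ⟨by rwa [Function.iterate_succ_apply'], ?_⟩
    rw [Function.iterate_succ_apply', h4, h2]
    omega



lemma reverse_X_sub_C (r : ℝ) : (X - C r).reverse = 1 - C r * X := by
  ext n
  rw [coeff_reverse]
  have hdeg : (X - C r).natDegree = 1 := natDegree_X_sub_C r
  rw [hdeg]
  match n with
  | 0 => simp
  | 1 => simp [coeff_one]
  | (n+2) => rw [revAt_eq_self_of_lt (by omega)]; simp [coeff_X, coeff_C, coeff_one]

lemma natDegree_prod_X_sub_C (s : Multiset ℝ) :
    ((s.map fun r => X - C r).prod).natDegree = Multiset.card s := by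
  rw [natDegree_multiset_prod_of_monic _ (fun f hf => by
    rw [Multiset.mem_map] at hf; obtain ⟨r, _, rfl⟩ := hf; exact monic_X_sub_C r)]
  rw [Multiset.map_map]
  simp [Function.comp_def, natDegree_X_sub_C]

lemma reverse_multiset_prod (s : Multiset ℝ[X]) :
    s.prod.reverse = (s.map Polynomial.reverse).prod := by
  induction s using Multiset.induction with
  | empty => simpa using reverse_C (1:ℝ)
  | cons a t ih =>
    rw [Multiset.prod_cons, Multiset.map_cons, Multiset.prod_cons,
      reverse_mul_of_domain, ih]

lemma RR.reverse {p : ℝ[X]} (hp : RR p) (h0 : p.coeff 0 ≠ 0) :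
    RR p.reverse ∧ p.reverse.natDegree = p.natDegree := by
  have hroots_ne : ∀ r ∈ p.roots, r ≠ 0 := by
    rintro r hr rfl
    rw [mem_roots hp.1] at hr
    exact h0 (by simpa [IsRoot, eval_zero, coeff_zero_eq_eval_zero] using hr)
  have hfact := C_leadingCoeff_mul_prod_multiset_X_sub_C hp.2
  have hrev : p.reverse =
      C p.leadingCoeff * ((p.roots.map fun r => -C r * (X - C r⁻¹)).prod) := by
    conv_lhs => rw [← hfact]
    rw [reverse_mul_of_domain, reverse_C, reverse_multiset_prod, Multiset.map_map]
    congr 2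
    refine Multiset.map_congr rfl fun r hr => ?_
    have hr0 : r ≠ 0 := hroots_ne r hr
    rw [Function.comp_apply, reverse_X_sub_C]
    have h1 : (C r : ℝ[X]) * C r⁻¹ = 1 := by rw [← C_mul, mul_inv_cancel₀ hr0, C_1]
    linear_combination -h1
  set c : ℝ := p.leadingCoeff * (p.roots.map fun r => -r).prod with hc
  have hprodsplit : (p.roots.map fun r => -C r * (X - C r⁻¹)).prod =
      C ((p.roots.map fun r => -r).prod) * ((p.roots.map fun r => r⁻¹).map fun r => X - C r).prod := by
    rw [Multiset.prod_map_mul]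
    congr 1
    · rw [map_multiset_prod, Multiset.map_map]
      exact congrArg Multiset.prod (Multiset.map_congr rfl fun r _ => by simp)
    · rw [Multiset.map_map]
      exact congrArg Multiset.prod (Multiset.map_congr rfl fun r _ => rfl)
  have hcne : c ≠ 0 := by
    refine mul_ne_zero (mt leadingCoeff_eq_zero.mp hp.1) ?_
    refine Multiset.prod_ne_zero ?_
    rw [Multiset.mem_map]
    rintro ⟨r, hr, hr0⟩
    exact hroots_ne r hr (by simpa [neg_eq_zero] using hr0.symm ▸ (neg_eq_zero.mp hr0))
  have hrev2 : p.reverse = C c * ((p.roots.map fun r => r⁻¹).map fun r => X - C r).prod := by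
    rw [hrev, hprodsplit, ← mul_assoc, ← C_mul, hc]
  have hQmonic : (((p.roots.map fun r => r⁻¹).map fun r => X - C r).prod).Monic :=
    monic_multiset_prod_of_monic _ _ fun q _ => monic_X_sub_C q
  have hne : p.reverse ≠ 0 := by
    rw [hrev2]
    exact mul_ne_zero (by simpa using hcne) hQmonic.ne_zero
  have hdeg : p.reverse.natDegree = p.natDegree := by
    rw [hrev2, natDegree_mul (by simpa using hcne) hQmonic.ne_zero, natDegree_C,
      natDegree_prod_X_sub_C, Multiset.card_map, hp.2, zero_add]
  refine ⟨⟨hne, ?_⟩, hdeg⟩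
  rw [hdeg, hrev2, roots_C_mul _ hcne, roots_multiset_prod_X_sub_C,
    Multiset.card_map, hp.2]


lemma newton_step (s : Multiset ℝ) (j : ℕ) (h0 : 0 < s.esymm j) (h1 : s.esymm (j + 1) = 0) :
    s.esymm (j + 2) ≤ 0 := by
  by_contra hcon
  push_neg at hcon
  set N := Multiset.card s with hNdef
  have hN : j + 2 ≤ N := by
    by_contra h
    push_neg at h
    exact absurd (esymm_eq_zero_of_card_lt h) (ne_of_gt hcon)
  have hP := RR_Pm s
  have hPdeg := Pm_natDegree s
  set D := Polynomial.derivative^[N - (j + 2)] (Pm s) with hD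
  obtain ⟨hDrr, hDdeg⟩ := hP.iterate (N - (j + 2)) (by omega)
  rw [hPdeg] at hDdeg
  have hDdeg2 : D.natDegree = j + 2 := by rw [hD]; omega
  have hDcoeff : ∀ i ≤ j + 2,
      D.coeff (j + 2 - i) = ((N - i).descFactorial (N - (j + 2)) : ℝ) * s.esymm i := by
    intro i hi
    rw [hD, Polynomial.coeff_iterate_derivative, nsmul_eq_mul]
    have h2 : j + 2 - i + (N - (j + 2)) = N - i := by omega
    rw [h2, Pm_coeff s (by omega : i ≤ Multiset.card s)]
  have hdfpos : ∀ i ≤ j + 2, (0:ℝ) < ((N - i).descFactorial (N - (j + 2)) : ℝ) := by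
    intro i hi
    have : (N - i).descFactorial (N - (j + 2)) ≠ 0 := by
      rw [Ne, Nat.descFactorial_eq_zero_iff_lt]
      omega
    exact_mod_cast Nat.pos_of_ne_zero this
  have hD0 : D.coeff 0 ≠ 0 := by
    have := hDcoeff (j + 2) le_rfl
    simp only [Nat.sub_self] at this
    rw [this]
    exact (mul_pos (hdfpos (j+2) le_rfl) hcon).ne'
  obtain ⟨hRrr, hRdeg⟩ := hDrr.reverse hD0
  rw [hDdeg2] at hRdeg
  set R := D.reverse with hR
  obtain ⟨hGrr, hGdeg⟩ := hRrr.iterate j (by omega)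
  set G := Polynomial.derivative^[j] R with hG
  rw [hRdeg] at hGdeg
  have hGdeg2 : G.natDegree = 2 := by omega
  have hRcoeff : ∀ c ≤ j + 2, R.coeff c = D.coeff (j + 2 - c) := by
    intro c hc
    rw [hR, coeff_reverse, hDdeg2, revAt_le hc]
  have hGcoeff : ∀ c, G.coeff c = ((c + j).descFactorial j : ℝ) * R.coeff (c + j) := by
    intro c
    rw [hG, Polynomial.coeff_iterate_derivative, nsmul_eq_mul]
  have hdf2 : ∀ c : ℕ, (0:ℝ) < (c.descFactorial j : ℝ) → True := fun _ _ => trivial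
  have hbpos : ∀ c : ℕ, j ≤ c → (0:ℝ) < (c.descFactorial j : ℝ) := by
    intro c hc
    have : c.descFactorial j ≠ 0 := by rw [Ne, Nat.descFactorial_eq_zero_iff_lt]; omega
    exact_mod_cast Nat.pos_of_ne_zero this
  have hG1 : G.coeff 1 = 0 := by
    have hD1 := hDcoeff (j + 1) (by omega)
    rw [show j + 2 - (j + 1) = 1 by omega] at hD1
    rw [hGcoeff 1, hRcoeff (1 + j) (by omega), show j + 2 - (1 + j) = 1 by omega,
      hD1, h1, mul_zero, mul_zero]
  have hG0 : 0 < G.coeff 0 := by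
    have hD2 := hDcoeff j (by omega)
    rw [show j + 2 - j = 2 by omega] at hD2
    rw [hGcoeff 0, hRcoeff (0 + j) (by omega), show j + 2 - (0 + j) = 2 by omega, hD2]
    exact mul_pos (hbpos _ (by omega)) (mul_pos (hdfpos j (by omega)) h0)
  have hG2 : 0 < G.coeff 2 := by
    have hD3 := hDcoeff (j + 2) le_rfl
    rw [show j + 2 - (j + 2) = 0 by omega] at hD3
    rw [hGcoeff 2, hRcoeff (2 + j) (by omega), show j + 2 - (2 + j) = 0 by omega, hD3]
    exact mul_pos (hbpos _ (by omega)) (mul_pos (hdfpos (j + 2) le_rfl) hcon)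
  obtain ⟨x, hx⟩ := Multiset.exists_mem_of_ne_zero (by
    intro h
    have := hGrr.2
    rw [h, Multiset.card_zero, hGdeg2] at this
    omega : G.roots ≠ 0)
  have hxroot : G.eval x = 0 := by
    rw [Polynomial.mem_roots hGrr.1] at hx
    exact hx
  have heval : G.eval x = G.coeff 0 + G.coeff 1 * x + G.coeff 2 * x ^ 2 := by
    rw [Polynomial.eval_eq_sum_range' (show G.natDegree < 3 by omega)]
    rw [Finset.sum_range_succ, Finset.sum_range_succ, Finset.sum_range_one]
    ring
  rw [heval, hG1] at hxroot
  nlinarith [sq_nonneg x, hG0, hG2]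

lemma Pm_shift (s : Multiset ℝ) (u : ℝ) :
    Pm (s.map fun r => r + u) = (taylor u) (Pm s) := by
  rw [Pm, Pm, taylor_apply, Polynomial.multiset_prod_comp, Multiset.map_map, Multiset.map_map]
  refine congrArg Multiset.prod (Multiset.map_congr rfl fun r _ => ?_)
  simp only [Function.comp_apply, add_comp, X_comp, C_comp]
  rw [add_assoc, ← C_add, add_comm u r]

lemma esymm_shift_eval (s : Multiset ℝ) (u : ℝ) {j : ℕ} (hj : j ≤ Multiset.card s) :
    (s.map fun r => r + u).esymm j =
      eval u (hasseDeriv (Multiset.card s - j) (Pm s)) := by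
  have hcard : Multiset.card (s.map fun r => r + u) = Multiset.card s := Multiset.card_map _ _
  have h1 := Pm_coeff (s.map fun r => r + u) (j := j) (by rw [hcard]; exact hj)
  rw [hcard] at h1
  rw [← h1, Pm_shift, taylor_coeff]

lemma esymm_shift_pos (s : Multiset ℝ) (k : ℕ)
    (hΓ : ∀ i, 1 ≤ i → i ≤ k → 0 < s.esymm i)
    (u : ℝ) (hu : 0 ≤ u) {j : ℕ} (hj1 : 1 ≤ j) (hjk : j ≤ k) (hjN : j ≤ Multiset.card s) :
    0 < (s.map fun r => r + u).esymm j := by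
  set N := Multiset.card s with hN
  rw [esymm_shift_eval s u hjN,
    Polynomial.eval_eq_sum_range' (n := N + 1)
      (lt_of_le_of_lt ((natDegree_hasseDeriv_le _ _).trans (by rw [Pm_natDegree]; omega))
        (Nat.lt_succ_self N))]
  have key : ∀ i ∈ Finset.range (N + 1),
      0 ≤ (hasseDeriv (N - j) (Pm s)).coeff i * u ^ i := by
    intro i _
    rw [hasseDeriv_coeff]
    by_cases hij : i ≤ j
    · have hidx : i + (N - j) = N - (j - i) := by omega
      rw [hidx, Pm_coeff s (by omega)]
      have he : 0 ≤ s.esymm (j - i) := by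
        rcases Nat.eq_zero_or_pos (j - i) with h | h
        · rw [h, esymm_zero']; norm_num
        · exact (hΓ _ h (by omega)).le
      positivity
    · rw [coeff_eq_zero_of_natDegree_lt (by rw [Pm_natDegree]; omega), mul_zero, zero_mul]
  refine Finset.sum_pos' key ⟨0, Finset.mem_range.mpr (by omega), ?_⟩
  rw [hasseDeriv_coeff, Nat.zero_add, Pm_coeff s (by omega),
    Nat.choose_self, pow_zero, mul_one, Nat.cast_one, one_mul]
  exact hΓ j hj1 hjk

lemma garding_core : ∀ k : ℕ, 1 ≤ k → ∀ (t : Multiset ℝ) (x : ℝ),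
    k ≤ Multiset.card t + 1 →
    (∀ i, 1 ≤ i → i ≤ k → 0 < (x ::ₘ t).esymm i) →
    0 < t.esymm (k - 1) := by
  intro k
  induction k with
  | zero => omega
  | succ k ih =>
    intro _ t x hcard hΓ
    rcases Nat.eq_zero_or_pos k with rfl | hkpos
    · rw [Nat.sub_self, esymm_zero']; norm_num
    rw [Nat.add_sub_cancel]
    set N := Multiset.card t with hN
    have hcs : Multiset.card (x ::ₘ t) = N + 1 := by simp [hN]
    have hkN : k ≤ N := by omega
    set g : ℝ → ℝ := fun u => eval u (hasseDeriv (N - k) (Pm t)) with hg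
    have hgval : ∀ u, (t.map fun r => r + u).esymm k = g u := fun u =>
      esymm_shift_eval t u hkN
    have hg0 : t.esymm k = g 0 := by
      have := hgval 0
      rw [show (t.map fun r => r + (0:ℝ)) = t by simp] at this
      exact this
    by_contra hcontra
    push_neg at hcontra
    rw [hg0] at hcontra
    set u₀ : ℝ := 1 + (t.map fun r => |r|).sum with hu₀
    have habs : 0 ≤ (t.map fun r => |r|).sum :=
      multiset_sum_nonneg _ (by rintro y hy; rw [Multiset.mem_map] at hy
                                obtain ⟨r, _, rfl⟩ := hy; exact abs_nonneg r)
    have hu₀pos : 0 ≤ u₀ := by rw [hu₀]; linarith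
    have hgu₀ : 0 < g u₀ := by
      rw [← hgval u₀]
      refine esymm_pos ?_ (by rw [Multiset.card_map]; exact hkN)
      intro y hy
      rw [Multiset.mem_map] at hy
      obtain ⟨r, hr, rfl⟩ := hy
      have h1 : |r| ≤ (t.map fun r => |r|).sum :=
        Multiset.single_le_sum (by rintro y hy; rw [Multiset.mem_map] at hy
                                   obtain ⟨q, _, rfl⟩ := hy; exact abs_nonneg q)
          _ (Multiset.mem_map_of_mem _ hr)
      have h2 : -r ≤ |r| := neg_le_abs r
      rw [hu₀]
      linarith
    have hcont : Continuous g := by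
      rw [hg]; exact Polynomial.continuous _
    obtain ⟨c, hcmem, hgc⟩ := intermediate_value_Icc hu₀pos hcont.continuousOn
      (Set.mem_Icc.mpr ⟨hcontra, hgu₀.le⟩)
    have hc0 : 0 ≤ c := hcmem.1
    set t' := t.map (fun r => r + c) with ht'
    set x' := x + c with hx'
    have hs' : (x ::ₘ t).map (fun r => r + c) = x' ::ₘ t' := by
      rw [Multiset.map_cons]
    have hΓ' : ∀ i, 1 ≤ i → i ≤ k + 1 → 0 < (x' ::ₘ t').esymm i := by
      intro i hi1 hik
      rw [← hs']
      exact esymm_shift_pos (x ::ₘ t) (k + 1) hΓ c hc0 hi1 hik (by omega)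
    have ht'k : t'.esymm k = 0 := by rw [ht', hgval c, hgc]
    have hIH : 0 < t'.esymm (k - 1) := by
      refine ih hkpos t' x' (by rw [ht', Multiset.card_map]; omega) ?_
      intro i hi1 hik
      exact hΓ' i hi1 (by omega)
    have hNewton : t'.esymm (k + 1) ≤ 0 := by
      have := newton_step t' (k - 1) hIH (by rwa [Nat.sub_add_cancel hkpos])
      rwa [show k - 1 + 2 = k + 1 by omega] at this
    have hcons := esymm_cons x' t' k
    rw [ht'k, mul_zero, add_zero] at hcons
    have := hΓ' (k + 1) (by omega) le_rfl
    rw [hcons] at this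
    exact absurd this (not_lt.mpr hNewton)

lemma charpoly_add_smul_std {m : ℕ} (B : Matrix (Fin m) (Fin m) ℝ) (i j : Fin m) (t : ℝ) :
    (B + t • Matrix.single i j 1).charpoly =
      B.charpoly - C t * (Matrix.adjugate (Matrix.charmatrix B)) j i := by
  have hcm : Matrix.charmatrix (B + t • Matrix.single i j 1) =
      Matrix.updateRow (Matrix.charmatrix B) i
        ((Matrix.charmatrix B) i + (-(C t)) • (Pi.single j (1:ℝ[X]) : Fin m → ℝ[X])) := by
    refine Matrix.ext fun a b => ?_
    rw [Matrix.updateRow_apply]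
    by_cases ha : a = i
    · subst ha
      rw [if_pos rfl]
      simp only [Pi.add_apply, Pi.smul_apply, Pi.single_apply, smul_eq_mul,
        Matrix.charmatrix_apply, Matrix.add_apply, Matrix.smul_apply,
        Matrix.single, Matrix.of_apply, map_add]
      by_cases hb : b = j
      · subst hb
        simp only [and_true, if_pos rfl, if_true, eq_self_iff_true, mul_one, map_mul, map_one]
        ring
      · simp [hb, Ne.symm hb]
    · rw [if_neg ha]
      simp [Matrix.charmatrix_apply, Matrix.single, Matrix.add_apply, ha, Ne.symm ha]
  rw [Matrix.charpoly, hcm, Matrix.det_updateRow_add, Matrix.det_updateRow_smul,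
    Matrix.updateRow_eq_self, Matrix.adjugate_apply]
  rw [← Matrix.charpoly]
  ring

lemma newtonT_eq {m : ℕ} (k : ℕ) (B : Matrix (Fin m) (Fin m) ℝ) (i j : Fin m) :
    newtonT k B i j =
      (-1 : ℝ) ^ k * ((Matrix.adjugate (Matrix.charmatrix B)) j i).coeff (m - (k + 1)) := by
  set c : ℝ := (-1 : ℝ) ^ k * ((Matrix.adjugate (Matrix.charmatrix B)) j i).coeff (m - (k + 1))
    with hc
  have hfun : (fun t : ℝ => msigma (k + 1) (B + t • Matrix.single i j 1)) =
      fun t : ℝ => msigma (k + 1) B + t * c := by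
    funext t
    unfold msigma
    rw [charpoly_add_smul_std, coeff_sub, coeff_C_mul, hc, pow_succ]
    ring
  unfold newtonT
  rw [hfun]
  have hd : HasDerivAt (fun t : ℝ => msigma (k + 1) B + t * c) c 0 := by
    simpa using ((hasDerivAt_id (0 : ℝ)).mul_const c).const_add (msigma (k + 1) B)
  exact hd.deriv

section Conj

variable {m : ℕ}

open Matrix

lemma map_mul_poly (M N : Matrix (Fin m) (Fin m) ℝ) :
    (M * N).map (C : ℝ →+* ℝ[X]) = M.map C * N.map C := Matrix.map_mul

lemma charmatrix_conj (Q : Matrix (Fin m) (Fin m) ℝ) (hQ : Q * Qᵀ = 1)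
    (ev : Fin m → ℝ) (B : Matrix (Fin m) (Fin m) ℝ)
    (hBQ : B = Q * Matrix.diagonal ev * Qᵀ) :
    Matrix.charmatrix B =
      Q.map (C : ℝ →+* ℝ[X]) * Matrix.diagonal (fun a => (X : ℝ[X]) - C (ev a)) *
        (Qᵀ).map (C : ℝ →+* ℝ[X]) := by
  have hQp : Q.map (C : ℝ →+* ℝ[X]) * (Qᵀ).map (C : ℝ →+* ℝ[X]) = 1 := by
    rw [← map_mul_poly, hQ]
    simp
  have hcomm : Q.map (C : ℝ →+* ℝ[X]) * Matrix.scalar _ (X : ℝ[X]) =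
      Matrix.scalar _ (X : ℝ[X]) * Q.map (C : ℝ →+* ℝ[X]) :=
    ((Matrix.scalar_commute (X : ℝ[X]) (fun r' => Commute.all _ _) (Q.map C)).eq).symm
  have hMd : Matrix.diagonal (fun a => (X : ℝ[X]) - C (ev a)) =
      Matrix.scalar _ (X : ℝ[X]) - (Matrix.diagonal ev).map (C : ℝ →+* ℝ[X]) := by
    rw [Matrix.diagonal_map (map_zero _)]
    rw [show (Matrix.scalar (Fin m) (X : ℝ[X])) = Matrix.diagonal (fun _ => (X:ℝ[X])) from rfl,
      Matrix.diagonal_sub]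
  rw [hMd, Matrix.mul_sub, Matrix.sub_mul, hcomm, Matrix.mul_assoc, hQp, Matrix.mul_one]
  show Matrix.charmatrix B = _ - _
  rw [Matrix.charmatrix, hBQ, RingHom.mapMatrix_apply, map_mul_poly, map_mul_poly]

lemma adjugate_charmatrix_conj (Q : Matrix (Fin m) (Fin m) ℝ) (hQ : Q * Qᵀ = 1)
    (ev : Fin m → ℝ) (B : Matrix (Fin m) (Fin m) ℝ)
    (hBQ : B = Q * Matrix.diagonal ev * Qᵀ) :
    Matrix.adjugate (Matrix.charmatrix B) =
      Q.map (C : ℝ →+* ℝ[X]) *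
        Matrix.diagonal (fun a => ∏ b ∈ Finset.univ.erase a, ((X : ℝ[X]) - C (ev b))) *
        (Qᵀ).map (C : ℝ →+* ℝ[X]) := by
  have hQ' : Qᵀ * Q = 1 := mul_eq_one_comm.mp hQ
  have hQp : Q.map (C : ℝ →+* ℝ[X]) * (Qᵀ).map (C : ℝ →+* ℝ[X]) = 1 := by
    rw [← map_mul_poly, hQ]; simp
  have hQp' : (Qᵀ).map (C : ℝ →+* ℝ[X]) * Q.map (C : ℝ →+* ℝ[X]) = 1 := by
    rw [← map_mul_poly, hQ']; simp
  have hadjQ : Matrix.adjugate (Q.map (C : ℝ →+* ℝ[X])) =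
      (Q.map (C : ℝ →+* ℝ[X])).det • (Qᵀ).map (C : ℝ →+* ℝ[X]) := by
    calc Matrix.adjugate (Q.map (C : ℝ →+* ℝ[X]))
        = Matrix.adjugate (Q.map (C : ℝ →+* ℝ[X])) * (Q.map (C:ℝ→+*ℝ[X]) * (Qᵀ).map (C:ℝ→+*ℝ[X])) := by
          rw [hQp, Matrix.mul_one]
      _ = (Matrix.adjugate (Q.map (C:ℝ→+*ℝ[X])) * Q.map (C:ℝ→+*ℝ[X])) * (Qᵀ).map (C:ℝ→+*ℝ[X]) := by
          rw [Matrix.mul_assoc]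
      _ = (Q.map (C:ℝ→+*ℝ[X])).det • (Qᵀ).map (C:ℝ→+*ℝ[X]) := by
          rw [Matrix.adjugate_mul, Matrix.smul_mul, Matrix.one_mul]
  have hadjQT : Matrix.adjugate ((Qᵀ).map (C : ℝ →+* ℝ[X])) =
      ((Qᵀ).map (C : ℝ →+* ℝ[X])).det • Q.map (C : ℝ →+* ℝ[X]) := by
    calc Matrix.adjugate ((Qᵀ).map (C : ℝ →+* ℝ[X]))
        = Matrix.adjugate ((Qᵀ).map (C : ℝ →+* ℝ[X])) * ((Qᵀ).map (C:ℝ→+*ℝ[X]) * Q.map (C:ℝ→+*ℝ[X])) := by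
          rw [hQp', Matrix.mul_one]
      _ = (Matrix.adjugate ((Qᵀ).map (C:ℝ→+*ℝ[X])) * (Qᵀ).map (C:ℝ→+*ℝ[X])) * Q.map (C:ℝ→+*ℝ[X]) := by
          rw [Matrix.mul_assoc]
      _ = ((Qᵀ).map (C:ℝ→+*ℝ[X])).det • Q.map (C:ℝ→+*ℝ[X]) := by
          rw [Matrix.adjugate_mul, Matrix.smul_mul, Matrix.one_mul]
  have hdet1 : ((Qᵀ).map (C : ℝ →+* ℝ[X])).det * (Q.map (C : ℝ →+* ℝ[X])).det = 1 := by
    rw [← Matrix.det_mul, hQp']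
    exact Matrix.det_one
  rw [charmatrix_conj Q hQ ev B hBQ, Matrix.adjugate_mul_distrib, Matrix.adjugate_mul_distrib,
    Matrix.adjugate_diagonal, hadjQ, hadjQT]
  rw [Matrix.smul_mul, Matrix.mul_smul, Matrix.mul_smul, smul_smul, hdet1, one_smul,
    ← Matrix.mul_assoc]

lemma charpoly_conj (Q : Matrix (Fin m) (Fin m) ℝ) (hQ : Q * Qᵀ = 1)
    (ev : Fin m → ℝ) (B : Matrix (Fin m) (Fin m) ℝ)
    (hBQ : B = Q * Matrix.diagonal ev * Qᵀ) :
    B.charpoly = ((Finset.univ.val.map ev).map fun r => (X : ℝ[X]) - C r).prod := by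
  have hQp : Q.map (C : ℝ →+* ℝ[X]) * (Qᵀ).map (C : ℝ →+* ℝ[X]) = 1 := by
    rw [← map_mul_poly, hQ]; simp
  rw [Matrix.charpoly, charmatrix_conj Q hQ ev B hBQ, Matrix.det_mul, Matrix.det_mul]
  rw [mul_comm ((Q.map (C : ℝ →+* ℝ[X])).det) _, mul_assoc, ← Matrix.det_mul, hQp,
    Matrix.det_one, mul_one, Matrix.det_diagonal]
  rw [Finset.prod_eq_multiset_prod, Multiset.map_map]
  rfl

end Conj

open Matrix

lemma newtonT_formula {m : ℕ} (k : ℕ) (hk1 : 1 ≤ k) (hkm : k ≤ m)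
    (Q : Matrix (Fin m) (Fin m) ℝ) (hQ : Q * Qᵀ = 1)
    (ev : Fin m → ℝ) (B : Matrix (Fin m) (Fin m) ℝ)
    (hBQ : B = Q * Matrix.diagonal ev * Qᵀ) :
    newtonT (k - 1) B = Q * Matrix.diagonal
      (fun a => (((Finset.univ.erase a).val.map ev)).esymm (k - 1)) * Qᵀ := by
  refine Matrix.ext fun i j => ?_
  rw [newtonT_eq (k - 1) B i j, show k - 1 + 1 = k from Nat.succ_pred_eq_of_pos hk1,
    adjugate_charmatrix_conj Q hQ ev B hBQ]
  have hL : (Q.map (C : ℝ →+* ℝ[X]) *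
      Matrix.diagonal (fun a => ∏ b ∈ Finset.univ.erase a, ((X : ℝ[X]) - C (ev b))) *
      (Qᵀ).map (C : ℝ →+* ℝ[X])) j i
      = ∑ a, C (Q j a) * (∏ b ∈ Finset.univ.erase a, ((X : ℝ[X]) - C (ev b))) * C (Q i a) := by
    rw [Matrix.mul_apply]
    refine Finset.sum_congr rfl fun a _ => ?_
    rw [Matrix.mul_diagonal, Matrix.map_apply, Matrix.map_apply, Matrix.transpose_apply]
  have hRe : (Q * Matrix.diagonal
      (fun a => (((Finset.univ.erase a).val.map ev)).esymm (k - 1)) * Qᵀ) i j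
      = ∑ a, Q i a * (((Finset.univ.erase a).val.map ev)).esymm (k - 1) * Q j a := by
    rw [Matrix.mul_apply]
    refine Finset.sum_congr rfl fun a _ => ?_
    rw [Matrix.mul_diagonal, Matrix.transpose_apply]
  rw [hL, Polynomial.finset_sum_coeff, hRe, Finset.mul_sum]
  refine Finset.sum_congr rfl fun a _ => ?_
  rw [coeff_mul_C, coeff_C_mul]
  have hcard : Multiset.card (((Finset.univ.erase a).val.map ev)) = m - 1 := by
    rw [Multiset.card_map, Finset.erase_val, Multiset.card_erase_of_mem
      (Finset.mem_val.mpr (Finset.mem_univ a))]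
    simp
  have hprod : (∏ b ∈ Finset.univ.erase a, ((X : ℝ[X]) - C (ev b)))
      = ((((Finset.univ.erase a).val.map ev)).map fun r => (X : ℝ[X]) - C r).prod := by
    rw [Finset.prod_eq_multiset_prod, Multiset.map_map]; rfl
  have hcoeff : (∏ b ∈ Finset.univ.erase a, ((X : ℝ[X]) - C (ev b))).coeff (m - k)
      = (-1 : ℝ) ^ (k - 1) * (((Finset.univ.erase a).val.map ev)).esymm (k - 1) := by
    rw [hprod]
    have h1 : m - k ≤ Multiset.card (((Finset.univ.erase a).val.map ev)) := by
      rw [hcard]; omega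
    rw [Multiset.prod_X_sub_C_coeff _ h1, hcard, show m - 1 - (m - k) = k - 1 by omega]
  rw [hcoeff]
  have hsq : ((-1 : ℝ) ^ (k - 1)) * ((-1 : ℝ) ^ (k - 1)) = 1 := by
    rw [← pow_add]
    exact Even.neg_one_pow ⟨k - 1, rfl⟩
  linear_combination (Q j a * (((Finset.univ.erase a).val.map ev)).esymm (k - 1) * Q i a) * hsq

lemma msigma_eq {m : ℕ} (Q : Matrix (Fin m) (Fin m) ℝ) (hQ : Q * Qᵀ = 1)
    (ev : Fin m → ℝ) (B : Matrix (Fin m) (Fin m) ℝ)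
    (hBQ : B = Q * Matrix.diagonal ev * Qᵀ) {j : ℕ} (hj : j ≤ m) :
    msigma j B = (Finset.univ.val.map ev).esymm j := by
  unfold msigma
  rw [charpoly_conj Q hQ ev B hBQ]
  have hcard : Multiset.card ((Finset.univ.val.map ev : Multiset ℝ)) = m := by simp
  have h1 : m - j ≤ Multiset.card ((Finset.univ.val.map ev : Multiset ℝ)) := by
    rw [hcard]; omega
  rw [Multiset.prod_X_sub_C_coeff _ h1, hcard, Nat.sub_sub_self hj, ← mul_assoc, ← pow_add,
    Even.neg_one_pow ⟨j, rfl⟩, one_mul]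

end NewtonAux

open Matrix in
theorem newton_tensor_posDef_on_gardingCone (n k : ℕ) (hn : 2 ≤ n)
    (hk : 1 ≤ k) (hkn : k ≤ n - 1)
    (B : Matrix (Fin (n - 1)) (Fin (n - 1)) ℝ) (hB : B.IsSymm)
    (hΓ : ∀ j, 1 ≤ j → j ≤ k → 0 < msigma j B) :
    (newtonT (k - 1) B).PosDef ∧
      ∀ v : Fin (n - 1) → ℝ, 0 ≤ v ⬝ᵥ (newtonT (k - 1) B).mulVec v := by
  classical
  have hm1 : 1 ≤ n - 1 := by omega
  have hH : B.IsHermitian := by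
    show Bᴴ = B
    ext a b
    rw [Matrix.conjTranspose_apply, star_trivial]
    have h2 := congrFun (congrFun hB a) b
    rwa [Matrix.transpose_apply] at h2
  set Q : Matrix (Fin (n - 1)) (Fin (n - 1)) ℝ :=
    (Matrix.IsHermitian.eigenvectorUnitary hH : Matrix (Fin (n - 1)) (Fin (n - 1)) ℝ) with hQdef
  set ev : Fin (n - 1) → ℝ := hH.eigenvalues with hev
  have hstarQ : star Q = Qᵀ := by
    ext a b
    simp [Matrix.star_apply]
  have hQ : Q * Qᵀ = 1 := by
    have h := (Matrix.mem_unitaryGroup_iff).mp (Matrix.IsHermitian.eigenvectorUnitary hH).2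
    rwa [hstarQ] at h
  have hBQ : B = Q * Matrix.diagonal ev * Qᵀ := by
    have h := hH.spectral_theorem
    simp only [Unitary.conjStarAlgAut_apply, Unitary.coe_star] at h
    rwa [hstarQ, show (RCLike.ofReal ∘ hH.eigenvalues : Fin (n - 1) → ℝ) = ev from by
      funext a; simp [hev]] at h
  set d : Fin (n - 1) → ℝ := fun a => (((Finset.univ.erase a).val.map ev)).esymm (k - 1) with hd
  have hT : newtonT (k - 1) B = Q * Matrix.diagonal d * Qᵀ :=
    NewtonAux.newtonT_formula k hk hkn Q hQ ev B hBQ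
  have hdpos : ∀ a, 0 < d a := by
    intro a
    have hconsm : (ev a) ::ₘ ((Finset.univ.erase a).val.map ev) = Finset.univ.val.map ev := by
      rw [Finset.erase_val, ← Multiset.map_cons,
        Multiset.cons_erase (Finset.mem_val.mpr (Finset.mem_univ a))]
    have hcard : Multiset.card (((Finset.univ.erase a).val.map ev)) = n - 1 - 1 := by
      rw [Multiset.card_map, Finset.erase_val,
        Multiset.card_erase_of_mem (Finset.mem_val.mpr (Finset.mem_univ a))]
      simp
    refine NewtonAux.garding_core k hk ((Finset.univ.erase a).val.map ev) (ev a)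
      (by rw [hcard]; omega) ?_
    intro i hi1 hik
    rw [hconsm, ← NewtonAux.msigma_eq Q hQ ev B hBQ (le_trans hik hkn)]
    exact hΓ i hi1 hik
  have hyx : ∀ x : Fin (n - 1) → ℝ, Q *ᵥ (Qᵀ *ᵥ x) = x := fun x => by
    rw [Matrix.mulVec_mulVec, hQ, Matrix.one_mulVec]
  have hquad : ∀ x : Fin (n - 1) → ℝ,
      x ⬝ᵥ (Q * Matrix.diagonal d * Qᵀ) *ᵥ x
        = ∑ a, d a * ((Qᵀ *ᵥ x) a * (Qᵀ *ᵥ x) a) := by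
    intro x
    rw [← Matrix.mulVec_mulVec, ← Matrix.mulVec_mulVec, Matrix.dotProduct_mulVec x Q _,
      show x ᵥ* Q = Qᵀ *ᵥ x from by rw [← Matrix.transpose_transpose Q,
        Matrix.vecMul_transpose, Matrix.transpose_transpose]]
    rw [dotProduct]
    refine Finset.sum_congr rfl fun a _ => ?_
    rw [Matrix.mulVec_diagonal]
    ring
  have hPD : (newtonT (k - 1) B).PosDef := by
    refine Matrix.posDef_iff_dotProduct_mulVec.mpr ⟨?_, ?_⟩
    · rw [hT, ← hstarQ, Matrix.star_eq_conjTranspose]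
      exact Matrix.isHermitian_mul_mul_conjTranspose Q (Matrix.isHermitian_diagonal d)
    · intro x hx
      rw [star_trivial, hT, hquad x]
      have hy : Qᵀ *ᵥ x ≠ 0 := by
        intro h0
        apply hx
        rw [← hyx x, h0, Matrix.mulVec_zero]
      obtain ⟨a, ha⟩ := Function.ne_iff.mp hy
      refine Finset.sum_pos' (fun b _ => mul_nonneg (hdpos b).le (mul_self_nonneg _)) ?_
      exact ⟨a, Finset.mem_univ a, mul_pos (hdpos a) (mul_self_pos.mpr ha)⟩
  refine ⟨hPD, fun v => ?_⟩
  rcases eq_or_ne v 0 with rfl | hv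
  · simp
  · have := hPD.dotProduct_mulVec_pos hv
    rw [star_trivial] at this
    exact this.le
end
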